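/- arXiv:1811.08870 — 9 statements merged into one kernel-verified Lean document; each statement's English description precedes it below -/
import Mathlib

section
/- Let F : ℂ → ℂ be continuous on the closed unit disc {z : |z| ≤ 1} and holomorphic on the open unit disc {z : |z| < 1}. The following two properties are equivalent: (i) there exist ρ > 1, M > 0, and a function G holomorphic on {z : |z| < ρ} such that G = F on the open unit disc and |G(z)| ≤ M for all |z| < ρ; (ii) there exist ρ > 1 and M > 0 such that for every integer n ≥ 0 there is a polynomial P of degree at most n−1 with sup_{|z| ≤ 1} |F(z) − P(z)| ≤ M ρ^{−n}. -/
/-!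
If `F` extends holomorphically to a disc of radius `ρ > 1`, the Taylor polynomials of the
extension converge to it geometrically on any smaller closed disc, in particular on the closed
unit disc. Conversely, if `‖F - Pₙ‖ ≤ M ρ⁻ⁿ` on the closed unit disc with `deg Pₙ < n`, then
`Pₙ₊₁ - Pₙ` has degree `≤ n` and is `≤ 2M ρ⁻ⁿ` on the unit circle, so by the maximum principle
applied to its reflection it is `≤ 2M (r/ρ)ⁿ` on the disc of radius `r`. For `1 < r < ρ` the
telescoping series `∑ (Pₙ₊₁ - Pₙ)` therefore converges uniformly on that disc to a bounded
holomorphic function, which agrees with `F` on the unit disc.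
-/

open Polynomial Metric Set Filter
open scoped NNReal

theorem Complex.norm_le_of_forall_mem_sphere_norm_le {F : Type*} [NormedAddCommGroup F]
    [NormedSpace ℂ F] {f : ℂ → F} {a : ℂ} {r c : ℝ} (hr : r ≠ 0)
    (hf : DiffContOnCl ℂ f (ball a r)) (hc : ∀ z ∈ sphere a r, ‖f z‖ ≤ c) {z : ℂ}
    (hz : z ∈ closedBall a r) : ‖f z‖ ≤ c :=
  norm_le_of_forall_mem_frontier_norm_le isBounded_ball hf (by rwa [frontier_ball a hr])
    (by rwa [closure_ball a hr])

namespace Polynomial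

/-- Bernstein–Walsh inequality for the unit disc. -/
theorem norm_eval_le_mul_max_one_pow {Q : ℂ[X]} {m : ℕ} (hQ : Q.natDegree ≤ m) {c : ℝ}
    (hc : ∀ z ∈ sphere (0 : ℂ) 1, ‖Q.eval z‖ ≤ c) (z : ℂ) :
    ‖Q.eval z‖ ≤ c * max 1 ‖z‖ ^ m := by
  have hc0 : 0 ≤ c := (norm_nonneg _).trans (hc 1 (by simp))
  have hdisc (S : ℂ[X]) (hS : ∀ z ∈ sphere (0 : ℂ) 1, ‖S.eval z‖ ≤ c) (w : ℂ) (hw : ‖w‖ ≤ 1) :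
      ‖S.eval w‖ ≤ c :=
    Complex.norm_le_of_forall_mem_sphere_norm_le one_ne_zero S.differentiable.diffContOnCl hS
      (by simpa using hw)
  rcases le_or_gt ‖z‖ 1 with hz | hz
  · simpa [max_eq_left hz] using hdisc Q hc z hz
  -- outside the disc pass to the reflected polynomial: on the circle its values are those of `Q`
  -- up to a unimodular factor
  have hreflect (w : ℂ) (hw : w ≠ 0) : Q.eval w = (Q.reflect m).eval w⁻¹ * w ^ m := by
    let := invertibleOfNonzero hw
    simpa [eval₂_id] using (eval₂_reflect_mul_pow (RingHom.id ℂ) w m Q hQ).symm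
  have hR : ∀ w ∈ sphere (0 : ℂ) 1, ‖(Q.reflect m).eval w‖ ≤ c := by
    intro w hw
    have hw1 : ‖w‖ = 1 := by simpa using hw
    have hw0 : w ≠ 0 := norm_ne_zero_iff.mp (by rw [hw1]; exact one_ne_zero)
    simpa [hreflect w⁻¹ (inv_ne_zero hw0), hw1] using hc w⁻¹ (by simpa using hw1)
  have hz0 : z ≠ 0 := norm_ne_zero_iff.mp (by linarith)
  rw [hreflect z hz0, norm_mul, norm_pow, max_eq_right hz.le]
  gcongr
  exact hdisc _ hR _ (by rw [norm_inv]; exact inv_le_one_of_one_le₀ hz.le)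

end Polynomial

namespace FormalMultilinearSeries

variable {𝕜 : Type*} [NontriviallyNormedField 𝕜] (p : FormalMultilinearSeries 𝕜 𝕜 𝕜) (n : ℕ)

noncomputable def truncPolynomial : 𝕜[X] :=
  ∑ k : Fin n, C (p.coeff k) * X ^ (k : ℕ)

theorem degree_truncPolynomial_lt : (p.truncPolynomial n).degree < n :=
  degree_sum_fin_lt _

theorem eval_truncPolynomial (z : 𝕜) : (p.truncPolynomial n).eval z = p.partialSum n z := by
  simp only [truncPolynomial, eval_finsetSum, eval_mul, eval_C, eval_pow, eval_X, partialSum,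
    apply_eq_pow_smul_coeff, smul_eq_mul]
  rw [Fin.sum_univ_eq_sum_range (fun k => p.coeff k * z ^ k)]
  exact Finset.sum_congr rfl fun k _ => mul_comm _ _

end FormalMultilinearSeries

theorem DifferentiableOn.exists_polynomial_approx_geometric {f : ℂ → ℂ} {r R : ℝ}
    (hf : DifferentiableOn ℂ f (ball 0 R)) (hr : 0 ≤ r) (hrR : r < R) :
    ∃ a ∈ Ioo (0 : ℝ) 1, ∃ C > 0, ∀ n : ℕ, ∃ P : ℂ[X], P.degree < n ∧
      ∀ z ∈ closedBall (0 : ℂ) r, ‖f z - P.eval z‖ ≤ C * a ^ n := by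
  obtain ⟨r', hrr', hr'R⟩ := exists_between hrR
  obtain ⟨R', hr'R', hR'R⟩ := exists_between hr'R
  lift r' to ℝ≥0 using hr.trans hrr'.le
  lift R' to ℝ≥0 using r'.2.trans hr'R'.le
  have hps := (hf.mono (closedBall_subset_ball hR'R)).hasFPowerSeriesOnBall
    (NNReal.coe_pos.mp (r'.2.trans_lt hr'R'))
  obtain ⟨a, ha, C, hC, happrox⟩ := hps.uniform_geometric_approx (r' := r') (mod_cast hr'R')
  refine ⟨a, ha, C, hC, fun n => ⟨_, (cauchyPowerSeries f 0 R').degree_truncPolynomial_lt n,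
    fun z hz => ?_⟩⟩
  simpa [FormalMultilinearSeries.eval_truncPolynomial] using
    happrox z (closedBall_subset_ball hrr' hz) n

section PolynomialApprox

variable {F : ℂ → ℂ} {ρ M : ℝ} {P : ℕ → ℂ[X]}

theorem norm_eval_succ_sub_eval_le (hρ : 1 ≤ ρ) (hM : 0 ≤ M) (hdeg : ∀ n, (P n).degree < n)
    (happrox : ∀ n, ∀ z ∈ closedBall (0 : ℂ) 1, ‖F z - (P n).eval z‖ ≤ M / ρ ^ n)
    (n : ℕ) {r : ℝ} (hr : 1 ≤ r) {z : ℂ} (hz : ‖z‖ ≤ r) :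
    ‖(P (n + 1)).eval z - (P n).eval z‖ ≤ 2 * M * (r / ρ) ^ n := by
  have hdeg_sub : (P (n + 1) - P n).natDegree ≤ n := by
    have hlt : (P n).degree < ↑(n + 1) := (hdeg n).trans (WithBot.coe_lt_coe.mpr n.lt_succ_self)
    exact natDegree_le_of_degree_le <| Order.le_of_lt_succ <|
      (degree_sub_le _ _).trans_lt (max_lt (hdeg (n + 1)) hlt)
  have hcircle : ∀ w ∈ sphere (0 : ℂ) 1, ‖(P (n + 1) - P n).eval w‖ ≤ 2 * M / ρ ^ n := by
    intro w hw
    have hw1 := sphere_subset_closedBall hw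
    have hρn : M / ρ ^ (n + 1) ≤ M / ρ ^ n :=
      div_le_div_of_nonneg_left hM (by positivity) (pow_le_pow_right₀ hρ n.le_succ)
    calc ‖(P (n + 1) - P n).eval w‖
        = ‖(F w - (P n).eval w) - (F w - (P (n + 1)).eval w)‖ := by rw [eval_sub]; ring_nf
      _ ≤ M / ρ ^ n + M / ρ ^ (n + 1) :=
          (norm_sub_le _ _).trans (add_le_add (happrox n w hw1) (happrox (n + 1) w hw1))
      _ ≤ 2 * M / ρ ^ n := by rw [two_mul, add_div]; linarith
  calc ‖(P (n + 1)).eval z - (P n).eval z‖ = ‖(P (n + 1) - P n).eval z‖ := by rw [eval_sub]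
    _ ≤ 2 * M / ρ ^ n * max 1 ‖z‖ ^ n := norm_eval_le_mul_max_one_pow hdeg_sub hcircle z
    _ ≤ 2 * M / ρ ^ n * r ^ n := by gcongr; exact max_le hr hz
    _ = 2 * M * (r / ρ) ^ n := by rw [div_pow]; ring

theorem exists_bounded_differentiableOn_of_polynomial_approx (hρ : 1 < ρ) (hM : 0 < M)
    (hdeg : ∀ n, (P n).degree < n)
    (happrox : ∀ n, ∀ z ∈ closedBall (0 : ℂ) 1, ‖F z - (P n).eval z‖ ≤ M / ρ ^ n)
    {r : ℝ} (hr : 1 ≤ r) (hrρ : r < ρ) :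
    ∃ G : ℂ → ℂ, DifferentiableOn ℂ G (ball 0 r) ∧ EqOn G F (closedBall 0 1) ∧
      ∃ C > 0, ∀ z ∈ ball (0 : ℂ) r, ‖G z‖ ≤ C := by
  set D : ℕ → ℂ → ℂ := fun n z => (P (n + 1)).eval z - (P n).eval z
  set q := r / ρ
  have hq : q ∈ Ico (0 : ℝ) 1 := ⟨by positivity, (div_lt_one (by linarith)).mpr hrρ⟩
  have hsum : HasSum (fun n => 2 * M * q ^ n) (2 * M * (1 - q)⁻¹) :=
    (hasSum_geometric_of_lt_one hq.1 hq.2).mul_left _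
  have hD : ∀ n, ∀ z ∈ closedBall (0 : ℂ) r, ‖D n z‖ ≤ 2 * M * q ^ n := fun n z hz =>
    norm_eval_succ_sub_eval_le hρ.le hM.le hdeg happrox n hr (by simpa using hz)
  have hP0 : P 0 = 0 := by simpa using hdeg 0
  -- the partial sums of `∑ D n` telescope to `P N`, as `P 0 = 0`
  have hunif : TendstoUniformlyOn (fun N z => (P N).eval z) (fun z => ∑' n, D n z) atTop
      (closedBall 0 r) := by
    refine (tendstoUniformlyOn_tsum_nat hsum.summable hD).congr (Eventually.of_forall
      fun N z _ => ?_)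
    simp [D, Finset.sum_range_sub (fun n => (P n).eval z), hP0]
  refine ⟨fun z => ∑' n, D n z, ?_, fun z hz => ?_, 2 * M * (1 - q)⁻¹, ?_, fun z hz => ?_⟩
  · exact (hunif.mono ball_subset_closedBall).tendstoLocallyUniformlyOn.differentiableOn
      (Eventually.of_forall fun N => (P N).differentiable.differentiableOn) isOpen_ball
  · refine tendsto_nhds_unique (hunif.tendsto_at (closedBall_subset_closedBall hr hz)) ?_
    rw [tendsto_iff_norm_sub_tendsto_zero]
    refine squeeze_zero (fun _ => norm_nonneg _) (fun n => norm_sub_rev (F z) _ ▸ happrox n z hz)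
      (tendsto_const_nhds.div_atTop (tendsto_pow_atTop_atTop_of_one_lt hρ))
  · exact mul_pos (by positivity) (inv_pos.mpr (sub_pos.mpr hq.2))
  · exact tsum_of_norm_bounded hsum fun n => hD n z (ball_subset_closedBall hz)

end PolynomialApprox

theorem stmt1_general (F : ℂ → ℂ)
    (hFc : ContinuousOn F (Metric.closedBall (0 : ℂ) 1)) :
    (∃ (ρ M : ℝ) (G : ℂ → ℂ), 1 < ρ ∧ 0 < M ∧
        DifferentiableOn ℂ G (Metric.ball (0 : ℂ) ρ) ∧
        (∀ z ∈ Metric.ball (0 : ℂ) 1, G z = F z) ∧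
        (∀ z ∈ Metric.ball (0 : ℂ) ρ, ‖G z‖ ≤ M)) ↔
    (∃ ρ M : ℝ, 1 < ρ ∧ 0 < M ∧
        ∀ n : ℕ, ∃ P : Polynomial ℂ, P.degree < n ∧
          ∀ z ∈ Metric.closedBall (0 : ℂ) 1, ‖F z - P.eval z‖ ≤ M / ρ ^ n) := by
  constructor
  · rintro ⟨ρ, -, G, hρ, -, hGd, hGF, -⟩
    have hGF' : EqOn G F (closedBall 0 1) :=
      EqOn.of_subset_closure hGF (hGd.continuousOn.mono (closedBall_subset_ball hρ)) hFc
        ball_subset_closedBall (closure_ball 0 one_ne_zero).ge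
    obtain ⟨a, ⟨ha0, ha1⟩, C, hC, happrox⟩ :=
      hGd.exists_polynomial_approx_geometric zero_le_one hρ
    refine ⟨a⁻¹, C, one_lt_inv₀ ha0 |>.mpr ha1, hC, fun n => ?_⟩
    obtain ⟨P, hdeg, hP⟩ := happrox n
    refine ⟨P, hdeg, fun z hz => ?_⟩
    simpa [← hGF' hz, div_eq_mul_inv] using hP z hz
  · rintro ⟨ρ, M, hρ, hM, hP⟩
    choose P hdeg happrox using hP
    obtain ⟨G, hGd, hGF, C, hC, hGC⟩ := exists_bounded_differentiableOn_of_polynomial_approx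
      hρ hM hdeg happrox (r := (1 + ρ) / 2) (by linarith) (by linarith)
    exact ⟨_, C, G, by linarith, hC, hGd, fun z hz => hGF (ball_subset_closedBall hz), hGC⟩

/-- Disc-algebra case of the appendix proposition: a function `F` in the disc algebra
extends to a bounded holomorphic function on a disc of radius `ρ > 1` if and only if
it is approximated by polynomials of degree `< n` at a geometric rate `M ρ^{-n}`. -/
theorem stmt1 (F : ℂ → ℂ)
    (hFc : ContinuousOn F (Metric.closedBall (0 : ℂ) 1))
    (hFd : DifferentiableOn ℂ F (Metric.ball (0 : ℂ) 1)) :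
    (∃ (ρ M : ℝ) (G : ℂ → ℂ), 1 < ρ ∧ 0 < M ∧
        DifferentiableOn ℂ G (Metric.ball (0 : ℂ) ρ) ∧
        (∀ z ∈ Metric.ball (0 : ℂ) 1, G z = F z) ∧
        (∀ z ∈ Metric.ball (0 : ℂ) ρ, ‖G z‖ ≤ M)) ↔
    (∃ ρ M : ℝ, 1 < ρ ∧ 0 < M ∧
        ∀ n : ℕ, ∃ P : Polynomial ℂ, P.degree < n ∧
          ∀ z ∈ Metric.closedBall (0 : ℂ) 1, ‖F z - P.eval z‖ ≤ M / ρ ^ n) :=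
  stmt1_general F hFc
end

section
/- Let X be a complex Hilbert space, V a closed subspace of X with orthogonal projection P_V, ℓ_1,…,ℓ_m continuous linear functionals on X, and L : X → ℂ^m the map L(f) = (ℓ_1(f),…,ℓ_m(f)). Let y ∈ ℂ^m, ε > 0, and let μ ≥ 0 satisfy ‖u‖ ≤ μ · dist(u, V) for every u ∈ ker(L). Suppose f⋆ ∈ X satisfies L(f⋆) = y and ‖f⋆ − P_V f⋆‖ ≤ ‖f − P_V f‖ for every f ∈ X with L(f) = y. Then for every f ∈ X with L(f) = y and dist(f, V) ≤ ε, one has ‖f − f⋆‖ ≤ μ · (ε² − ‖f⋆ − P_V f⋆‖²)^{1/2}. -/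
/-!
Write `Q = 1 - P_V` (the projection onto `Vᗮ`) and `u = f - f⋆ ∈ ker L`. Every `f⋆ + t u`
interpolates `y`, so `t ↦ ‖Q f⋆ + t Q u‖` is minimal at `t = 0`; this forces
`Re ⟪Q f⋆, Q u⟫ = 0`, whence `‖Q f⋆‖² + ‖Q u‖² = ‖Q f‖² ≤ ε²`. Finally
`‖u‖ ≤ μ dist(u, V) = μ ‖Q u‖ ≤ μ √(ε² - ‖Q f⋆‖²)`.
-/

open RCLike

section

variable {𝕜 E : Type*} [RCLike 𝕜] [NormedAddCommGroup E] [InnerProductSpace 𝕜 E]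

theorem Submodule.infDist_eq_norm_sub_starProjection (K : Submodule 𝕜 E)
    [K.HasOrthogonalProjection] (x : E) :
    Metric.infDist x (K : Set E) = ‖x - K.starProjection x‖ := by
  rw [Metric.infDist_eq_iInf, starProjection_minimal]
  simp only [dist_eq_norm]
  rfl

theorem re_inner_eq_zero_of_forall_norm_le_norm_add_smul {a b : E}
    (h : ∀ t : ℝ, ‖a‖ ≤ ‖a + (t : 𝕜) • b‖) : re (inner 𝕜 a b) = 0 := by
  have hquad : ∀ t : ℝ, 0 ≤ ‖b‖ ^ 2 * (t * t) + 2 * re (inner 𝕜 a b) * t + 0 := fun t => by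
    have hsq := pow_le_pow_left₀ (norm_nonneg a) (h t) 2
    rw [norm_add_sq (𝕜 := 𝕜), inner_smul_right, re_ofReal_mul, norm_smul, norm_ofReal,
      mul_pow, sq_abs] at hsq
    linarith
  have hdiscrim := discrim_le_zero hquad
  rw [discrim] at hdiscrim
  nlinarith [sq_nonneg (re (inner 𝕜 a b))]

theorem norm_sq_add_norm_sq_eq_of_forall_norm_le_norm_add_smul {a b : E}
    (h : ∀ t : ℝ, ‖a‖ ≤ ‖a + (t : 𝕜) • b‖) : ‖a‖ ^ 2 + ‖b‖ ^ 2 = ‖a + b‖ ^ 2 := by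
  rw [norm_add_sq (𝕜 := 𝕜), re_inner_eq_zero_of_forall_norm_le_norm_add_smul h]
  ring

end

theorem stmt2_general {X : Type*} [NormedAddCommGroup X] [InnerProductSpace ℂ X]
    (V : Submodule ℂ X) [V.HasOrthogonalProjection]
    {m : ℕ} (ℓ : Fin m → X →L[ℂ] ℂ) (y : Fin m → ℂ) (ε : ℝ)
    (μ : ℝ) (hμ0 : 0 ≤ μ)
    (hμ : ∀ u : X, (∀ k, ℓ k u = 0) → ‖u‖ ≤ μ * Metric.infDist u (V : Set X))
    (fs : X) (hfsy : ∀ k, ℓ k fs = y k)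
    (hfsmin : ∀ f : X, (∀ k, ℓ k f = y k) →
      ‖fs - (V.orthogonalProjectionOnto fs : X)‖ ≤ ‖f - (V.orthogonalProjectionOnto f : X)‖)
    (f : X) (hfy : ∀ k, ℓ k f = y k) (hfV : Metric.infDist f (V : Set X) ≤ ε) :
    ‖f - fs‖ ≤ μ * Real.sqrt (ε ^ 2 - ‖fs - (V.orthogonalProjectionOnto fs : X)‖ ^ 2) := by
  set Q : X →L[ℂ] X := (Vᗮ).starProjection
  have hQ (x : X) : x - (V.orthogonalProjectionOnto x : X) = Q x := by
    rw [Submodule.starProjection_orthogonal_val, Submodule.starProjection_apply]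
  have hdist (x : X) : Metric.infDist x (V : Set X) = ‖Q x‖ := by
    rw [V.infDist_eq_norm_sub_starProjection, ← hQ, Submodule.starProjection_apply]
  simp only [hQ] at hfsmin ⊢
  rw [hdist] at hfV
  set u := f - fs
  have hker (k : Fin m) : ℓ k u = 0 := by simp [u, hfy, hfsy]
  have hpyth : ‖Q fs‖ ^ 2 + ‖Q u‖ ^ 2 = ‖Q f‖ ^ 2 := by
    rw [← add_sub_cancel fs f, map_add]
    refine norm_sq_add_norm_sq_eq_of_forall_norm_le_norm_add_smul (𝕜 := ℂ) fun t => ?_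
    simpa using hfsmin (fs + (t : ℂ) • u) (by simp [hfsy, hker])
  have hQu : ‖Q u‖ ≤ Real.sqrt (ε ^ 2 - ‖Q fs‖ ^ 2) := by
    refine Real.le_sqrt_of_sq_le ?_
    nlinarith [norm_nonneg (Q f)]
  calc ‖u‖ ≤ μ * ‖Q u‖ := hdist u ▸ hμ u hker
    _ ≤ μ * Real.sqrt (ε ^ 2 - ‖Q fs‖ ^ 2) := by gcongr

/-- Upper-bound half of the optimal-recovery theorem for approximability models in
complex Hilbert spaces: the minimal-distance interpolant `f⋆` recovers every `f` in the
model set with error at most `μ √(ε² - ‖f⋆ - P_V f⋆‖²)`. -/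
theorem stmt2 {X : Type*} [NormedAddCommGroup X] [InnerProductSpace ℂ X] [CompleteSpace X]
    (V : Submodule ℂ X) [V.HasOrthogonalProjection]
    {m : ℕ} (ℓ : Fin m → X →L[ℂ] ℂ) (y : Fin m → ℂ) (ε : ℝ) (hε : 0 < ε)
    (μ : ℝ) (hμ0 : 0 ≤ μ)
    (hμ : ∀ u : X, (∀ k, ℓ k u = 0) → ‖u‖ ≤ μ * Metric.infDist u (V : Set X))
    (fs : X) (hfsy : ∀ k, ℓ k fs = y k)
    (hfsmin : ∀ f : X, (∀ k, ℓ k f = y k) →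
      ‖fs - (V.orthogonalProjectionOnto fs : X)‖ ≤ ‖f - (V.orthogonalProjectionOnto f : X)‖)
    (f : X) (hfy : ∀ k, ℓ k f = y k) (hfV : Metric.infDist f (V : Set X) ≤ ε) :
    ‖f - fs‖ ≤ μ * Real.sqrt (ε ^ 2 - ‖fs - (V.orthogonalProjectionOnto fs : X)‖ ^ 2) :=
  stmt2_general V ℓ y ε μ hμ0 hμ fs hfsy hfsmin f hfy hfV
end

section
/- Let X be a complex normed space, V a linear subspace of X, ℓ_1,…,ℓ_m and Q continuous linear functionals on X, and L : X → ℂ^m the map L(f) = (ℓ_1(f),…,ℓ_m(f)). Assume ker(L) ∩ V = {0}, and let μ ≥ 0 satisfy |Q(u)| ≤ μ · dist(u, V) for every u ∈ ker(L). Then there exists a ∈ ℂ^m such that Σ_{k=1}^m a_k ℓ_k(v) = Q(v) for every v ∈ V and ‖Q − Σ_{k=1}^m a_k ℓ_k‖_{X*} ≤ μ, where ‖·‖_{X*} denotes the operator norm of a continuous linear functional on X. -/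
/-!
Hahn–Banach: the functional `u + v ↦ Q u` on `ker L ⊔ V` is well defined, since the bound
forces `Q = 0` on `ker L ∩ V`, and has norm at most `μ`, since `|Q u| ≤ μ · dist(u, V) ≤ μ · ‖u + v‖`. A norm-preserving extension `Φ` to `X`
agrees with `Q` on `ker L = ⋂ ker ℓ_k`, so `Q - Φ` is a combination `Σ a_k ℓ_k`; then
`Q - Σ a_k ℓ_k = Φ` has norm at most `μ` and vanishes on `V`.
-/

open Metric

theorem ContinuousLinearMap.exists_eq_sum_smul_of_forall_apply_eq_zero
    {ι 𝕜 E : Type*} [Fintype ι] [Field 𝕜] [TopologicalSpace 𝕜] [IsTopologicalRing 𝕜]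
    [AddCommGroup E] [Module 𝕜 E] [TopologicalSpace E]
    (ℓ : ι → E →L[𝕜] 𝕜) (f : E →L[𝕜] 𝕜) (hf : ∀ x, (∀ k, ℓ k x = 0) → f x = 0) :
    ∃ a : ι → 𝕜, f = ∑ k, a k • ℓ k := by
  have hker : ⨅ k, LinearMap.ker (ℓ k : E →ₗ[𝕜] 𝕜) ≤ LinearMap.ker (f : E →ₗ[𝕜] 𝕜) :=
    fun x hx ↦ hf x (by simpa [Submodule.mem_iInf] using hx)
  obtain ⟨a, ha⟩ :=
    (Submodule.mem_span_range_iff_exists_fun 𝕜).1 (mem_span_of_iInf_ker_le_ker hker)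
  refine ⟨a, ContinuousLinearMap.coe_injective ?_⟩
  simpa using ha.symm

section

variable {𝕜 E : Type*} [RCLike 𝕜] [NormedAddCommGroup E] [NormedSpace 𝕜 E]

theorem exists_strongDual_eq_and_eq_zero_of_le_mul_infDist (K V : Submodule 𝕜 E)
    (Q : K →ₗ[𝕜] 𝕜) {μ : ℝ} (hμ0 : 0 ≤ μ) (hμ : ∀ u : K, ‖Q u‖ ≤ μ * infDist (u : E) V) :
    ∃ Φ : StrongDual 𝕜 E, (∀ u : K, Φ u = Q u) ∧ (∀ v ∈ V, Φ v = 0) ∧ ‖Φ‖ ≤ μ := by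
  have hQV : ∀ u : K, (u : E) ∈ V → Q u = 0 := fun u hu ↦ by
    simpa [infDist_zero_of_mem hu] using hμ u
  set ψ := LinearPMap.sup ⟨K, Q⟩ ⟨V, 0⟩ fun u v huv ↦ hQV u (huv ▸ v.2)
  have hψ : ∀ (u : K) (v : V) (w : ψ.domain), (u : E) + v = w → ψ w = Q u := fun u v w h ↦ by
    simpa using LinearPMap.sup_apply _ u v w h
  have hbound : ∀ w : ψ.domain, ‖ψ w‖ ≤ μ * ‖w‖ := by
    rintro ⟨w, hw⟩
    obtain ⟨u, hu, v, hv, rfl⟩ := Submodule.mem_sup.1 hw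
    rw [hψ ⟨u, hu⟩ ⟨v, hv⟩ _ rfl]
    calc ‖Q ⟨u, hu⟩‖ ≤ μ * infDist u V := hμ _
      _ ≤ μ * ‖u + v‖ := by
        gcongr
        simpa [dist_eq_norm] using infDist_le_dist_of_mem (V.neg_mem hv)
  obtain ⟨Φ, hΦ, hΦnorm⟩ := exists_extension_norm_eq _ (ψ.toFun.mkContinuous μ hbound)
  refine ⟨Φ, fun u ↦ ?_, fun v hv ↦ ?_, hΦnorm ▸ LinearMap.mkContinuous_norm_le _ hμ0 _⟩
  · rw [show (u : E) = (⟨u, Submodule.mem_sup_left u.2⟩ : ψ.domain) from rfl, hΦ]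
    exact hψ u 0 _ (add_zero _)
  · rw [show v = ((⟨v, Submodule.mem_sup_right hv⟩ : ψ.domain) : E) from rfl, hΦ]
    exact (hψ 0 ⟨v, hv⟩ _ (zero_add _)).trans (map_zero Q)

end

theorem stmt6_general {X : Type*} [NormedAddCommGroup X] [NormedSpace ℂ X]
    (V : Submodule ℂ X) {m : ℕ} (ℓ : Fin m → X →L[ℂ] ℂ) (Q : X →L[ℂ] ℂ)
    (μ : ℝ) (hμ0 : 0 ≤ μ)
    (hμ : ∀ u : X, (∀ k, ℓ k u = 0) → ‖Q u‖ ≤ μ * Metric.infDist u (V : Set X)) :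
    ∃ a : Fin m → ℂ, (∀ v ∈ V, ∑ k, a k * ℓ k v = Q v) ∧
      ‖Q - ∑ k, a k • ℓ k‖ ≤ μ := by
  set K := ⨅ k, LinearMap.ker (ℓ k : X →ₗ[ℂ] ℂ)
  have mem_K : ∀ u, u ∈ K ↔ ∀ k, ℓ k u = 0 := by simp [K, Submodule.mem_iInf]
  obtain ⟨Φ, hΦK, hΦV, hΦ⟩ := exists_strongDual_eq_and_eq_zero_of_le_mul_infDist K V
    ((Q : X →ₗ[ℂ] ℂ).domRestrict K) hμ0 fun u ↦ hμ u ((mem_K u).1 u.2)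
  obtain ⟨a, ha⟩ := (Q - Φ).exists_eq_sum_smul_of_forall_apply_eq_zero ℓ fun x hx ↦ by
    simpa [sub_eq_zero] using (hΦK ⟨x, (mem_K x).2 hx⟩).symm
  refine ⟨a, fun v hv ↦ ?_, by rwa [← ha, sub_sub_cancel]⟩
  simpa [hΦV v hv] using congr($ha.symm v)

/-- Strong-duality step of the optimal-estimation theorem in complex normed spaces:
if `ker(L) ∩ V = {0}` and `|Q(u)| ≤ μ · dist(u, V)` for all `u ∈ ker(L)`, then there is
a weight vector `a` agreeing with `Q` on `V` such that `‖Q - Σ a_k ℓ_k‖_{X*} ≤ μ`. -/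
theorem stmt6 {X : Type*} [NormedAddCommGroup X] [NormedSpace ℂ X]
    (V : Submodule ℂ X) {m : ℕ} (ℓ : Fin m → X →L[ℂ] ℂ) (Q : X →L[ℂ] ℂ)
    (hcap : ∀ u : X, (∀ k, ℓ k u = 0) → u ∈ V → u = 0)
    (μ : ℝ) (hμ0 : 0 ≤ μ)
    (hμ : ∀ u : X, (∀ k, ℓ k u = 0) → ‖Q u‖ ≤ μ * Metric.infDist u (V : Set X)) :
    ∃ a : Fin m → ℂ, (∀ v ∈ V, ∑ k, a k * ℓ k v = Q v) ∧
      ‖Q - ∑ k, a k • ℓ k‖ ≤ μ :=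
  stmt6_general V ℓ Q μ hμ0 hμ
end

section
/- Let X be a complex Hilbert space, let L_1,…,L_m ∈ X be linearly independent, let ℓ_k(f) = ⟨f, L_k⟩ and L(f) = (ℓ_1(f),…,ℓ_m(f)), and let V_1,…,V_n ∈ X be orthonormal with n ≤ m and V = span{V_1,…,V_n}. Define G ∈ ℂ^{m×n} by G_{k,j} = ⟨V_j, L_k⟩ and H ∈ ℂ^{m×m} by H_{k,j} = ⟨L_j, L_k⟩ (so H is Hermitian positive definite). Assume ker(L) ≠ {0} and V ∩ ker(L) = {0}. Then the Hermitian matrix G*H^{−1}G is positive definite and sup{‖u‖²/dist(u, V)² : u ∈ ker(L), u ≠ 0} = 1/λ_min(G*H^{−1}G), where λ_min denotes the smallest eigenvalue. -/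
open Matrix
open scoped ComplexOrder

/-!
Write `U = span V`, `W = span L` (so `ker L = Wᗮ`) and `P_W` for the orthogonal projection
onto `W`. In the coordinates `c` of `v = ∑ c_j V_j`, the quadratic form of `Gᴴ H⁻¹ G` is
`‖P_W v‖²`; hence this matrix is positive definite because `U ∩ Wᗮ = 0`, and its smallest
eigenvalue `λ` is the minimum of `‖P_W v‖²` over unit vectors `v ∈ U`.

For `u ∈ Wᗮ` we have `dist(u, U)² = ‖u‖² - ‖P_U u‖²`. With `v = P_U u`, Cauchy–Schwarz gives
`‖v‖² = ⟪v - P_W v, u⟫ ≤ √(1 - λ) ‖v‖ ‖u‖`, so `dist(u, U)² ≥ λ ‖u‖²`. Equality holds for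
`u = v₀ - P_W v₀` with `v₀` a unit eigenvector for `λ`, or for any `u ∈ Wᗮ` when `λ = 1`.
-/

namespace Matrix
variable {𝕜 n : Type*} [RCLike 𝕜] [Fintype n] [DecidableEq n] {A : Matrix n n 𝕜}

open scoped MatrixOrder in
lemma IsHermitian.iInf_eigenvalues_mul_re_dotProduct_le (hA : A.IsHermitian) (x : n → 𝕜) :
    (⨅ i, hA.eigenvalues i) * RCLike.re (star x ⬝ᵥ x) ≤ RCLike.re (star x ⬝ᵥ A *ᵥ x) := by
  have hle : algebraMap ℝ (Matrix n n 𝕜) (⨅ i, hA.eigenvalues i) ≤ A := by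
    rw [algebraMap_le_iff_le_spectrum (a := A) hA.isSelfAdjoint,
      hA.spectrum_real_eq_range_eigenvalues]
    rintro _ ⟨i, rfl⟩
    exact ciInf_le (Finite.bddBelow_range _) i
  have := (RCLike.nonneg_iff.mp ((le_iff.mp hle).dotProduct_mulVec_nonneg x)).1
  simpa [sub_mulVec, Algebra.algebraMap_eq_smul_one, smul_mulVec, dotProduct_smul,
    RCLike.smul_re] using this

lemma IsHermitian.exists_re_dotProduct_eq_iInf_eigenvalues [Nonempty n] (hA : A.IsHermitian) :
    ∃ x : n → 𝕜, RCLike.re (star x ⬝ᵥ x) = 1 ∧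
      RCLike.re (star x ⬝ᵥ A *ᵥ x) = ⨅ i, hA.eigenvalues i := by
  obtain ⟨i, hi⟩ := exists_eq_ciInf_of_finite (f := hA.eigenvalues)
  refine ⟨hA.eigenvectorBasis i, ?_, hi ▸ (hA.eigenvalues_eq i).symm⟩
  rw [dotProduct_comm, ← EuclideanSpace.inner_eq_star_dotProduct, inner_self_eq_norm_sq,
    hA.eigenvectorBasis.orthonormal.1 i, one_pow]

lemma PosDef.iInf_eigenvalues_pos [Nonempty n] (hA : A.PosDef) :
    0 < ⨅ i, hA.isHermitian.eigenvalues i := by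
  obtain ⟨i, hi⟩ := exists_eq_ciInf_of_finite (f := hA.isHermitian.eigenvalues)
  exact hi ▸ hA.eigenvalues_pos i

end Matrix

namespace Submodule
variable {𝕜 E : Type*} [RCLike 𝕜] [NormedAddCommGroup E] [InnerProductSpace 𝕜 E]
  (U W : Submodule 𝕜 E) [U.HasOrthogonalProjection] [W.HasOrthogonalProjection]

lemma mem_orthogonal_span_range_iff {ι : Type*} (L : ι → E) {u : E} :
    u ∈ (span 𝕜 (Set.range L))ᗮ ↔ ∀ k, inner 𝕜 (L k) u = 0 := by
  refine ⟨fun hu k => (mem_orthogonal _ u).mp hu _ (subset_span ⟨k, rfl⟩),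
    fun hu => (mem_orthogonal _ u).mpr fun w hw => ?_⟩
  induction hw using span_induction with
  | mem x hx => obtain ⟨k, rfl⟩ := hx; exact hu k
  | zero => exact inner_zero_left _
  | add x y _ _ hx hy => rw [inner_add_left, hx, hy, add_zero]
  | smul a x _ hx => rw [inner_smul_left, hx, mul_zero]

lemma norm_starProjection_sq_eq_re_inner (u : E) :
    ‖U.starProjection u‖ ^ 2 = RCLike.re (inner 𝕜 (U.starProjection u) u) := by
  rw [re_inner_starProjection_eq_normSq, starProjection_apply, norm_coe]

lemma infDist_sq_eq_norm_sq_sub_norm_starProjection_sq (u : E) :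
    Metric.infDist u U ^ 2 = ‖u‖ ^ 2 - ‖U.starProjection u‖ ^ 2 := by
  have hdist : Metric.infDist u U = ‖Uᗮ.starProjection u‖ := by
    rw [Metric.infDist_eq_iInf, starProjection_orthogonal_val, starProjection_minimal]
    simp only [dist_eq_norm]
    rfl
  rw [hdist, U.norm_sq_eq_add_norm_sq_starProjection u]
  ring

variable {U W} {lam : ℝ}

lemma norm_starProjection_sq_le_of_mem_orthogonal
    (hlow : ∀ v ∈ U, lam * ‖v‖ ^ 2 ≤ ‖W.starProjection v‖ ^ 2) (hlam : lam ≤ 1)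
    {u : E} (hu : u ∈ Wᗮ) : ‖U.starProjection u‖ ^ 2 ≤ (1 - lam) * ‖u‖ ^ 2 := by
  set v := U.starProjection u
  -- `u ⊥ W`, so only the component of `v` orthogonal to `W` sees `u`
  have hv : ‖v‖ ^ 2 = RCLike.re (inner 𝕜 (Wᗮ.starProjection v) u) := by
    rw [inner_starProjection_left_eq_right, starProjection_eq_self_iff.mpr hu,
      norm_starProjection_sq_eq_re_inner]
  have hCS : ‖v‖ ^ 2 ≤ ‖Wᗮ.starProjection v‖ * ‖u‖ := hv ▸ re_inner_le_norm _ _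
  have hperp : ‖Wᗮ.starProjection v‖ ^ 2 ≤ (1 - lam) * ‖v‖ ^ 2 := by
    have := W.norm_sq_eq_add_norm_sq_starProjection v
    linarith [hlow v (U.starProjection_apply_mem u)]
  rcases (sq_nonneg ‖v‖).eq_or_lt with h0 | hpos
  · rw [← h0]
    exact mul_nonneg (by linarith) (sq_nonneg _)
  · refine le_of_mul_le_mul_left ?_ hpos
    nlinarith [norm_nonneg (Wᗮ.starProjection v), norm_nonneg u]

lemma mul_norm_sq_le_infDist_sq
    (hlow : ∀ v ∈ U, lam * ‖v‖ ^ 2 ≤ ‖W.starProjection v‖ ^ 2) (hlam : lam ≤ 1)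
    {u : E} (hu : u ∈ Wᗮ) : lam * ‖u‖ ^ 2 ≤ Metric.infDist u U ^ 2 := by
  rw [infDist_sq_eq_norm_sq_sub_norm_starProjection_sq]
  linarith [norm_starProjection_sq_le_of_mem_orthogonal hlow hlam hu]

lemma norm_sq_le_norm_starProjection_starProjection_orthogonal {v : E} (hv : v ∈ U)
    (hv1 : ‖v‖ = 1) :
    ‖Wᗮ.starProjection v‖ ^ 2 ≤ ‖U.starProjection (Wᗮ.starProjection v)‖ := by
  calc ‖Wᗮ.starProjection v‖ ^ 2 = RCLike.re (inner 𝕜 (Wᗮ.starProjection v) v) :=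
        norm_starProjection_sq_eq_re_inner _ v
    _ = RCLike.re (inner 𝕜 (U.starProjection (Wᗮ.starProjection v)) v) := by
        rw [U.inner_starProjection_left_eq_right, U.starProjection_eq_self_iff.mpr hv]
    _ ≤ ‖U.starProjection (Wᗮ.starProjection v)‖ := by
        simpa [hv1] using re_inner_le_norm (U.starProjection (Wᗮ.starProjection v)) v

lemma exists_infDist_sq_eq_mul_norm_sq
    (hlow : ∀ v ∈ U, lam * ‖v‖ ^ 2 ≤ ‖W.starProjection v‖ ^ 2)
    {v₀ : E} (hv₀ : v₀ ∈ U) (hv₀1 : ‖v₀‖ = 1) (hv₀lam : ‖W.starProjection v₀‖ ^ 2 = lam)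
    (hK : ∃ u ∈ Wᗮ, u ≠ 0) (hlam : lam ≤ 1) :
    ∃ u ∈ Wᗮ, u ≠ 0 ∧ Metric.infDist u U ^ 2 = lam * ‖u‖ ^ 2 := by
  suffices ∃ u ∈ Wᗮ, u ≠ 0 ∧ Metric.infDist u U ^ 2 ≤ lam * ‖u‖ ^ 2 by
    obtain ⟨u, hu, hu0, hle⟩ := this
    exact ⟨u, hu, hu0, hle.antisymm (mul_norm_sq_le_infDist_sq hlow hlam hu)⟩
  rcases hlam.lt_or_eq with hlt | rfl
  · set u := Wᗮ.starProjection v₀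
    have hu : ‖u‖ ^ 2 = 1 - lam := by
      have := W.norm_sq_eq_add_norm_sq_starProjection v₀
      rw [hv₀1] at this
      linarith
    have hPu := norm_sq_le_norm_starProjection_starProjection_orthogonal (W := W) hv₀ hv₀1
    refine ⟨u, Wᗮ.starProjection_apply_mem v₀, fun h0 => ?_, ?_⟩
    · rw [h0, norm_zero] at hu
      linarith
    · rw [infDist_sq_eq_norm_sq_sub_norm_starProjection_sq, hu]
      nlinarith
  · obtain ⟨u, hu, hu0⟩ := hK
    refine ⟨u, hu, hu0, ?_⟩
    rw [infDist_sq_eq_norm_sq_sub_norm_starProjection_sq]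
    nlinarith [sq_nonneg ‖U.starProjection u‖]

theorem isGreatest_norm_sq_div_infDist_sq (hlam : 0 < lam)
    (hlow : ∀ v ∈ U, lam * ‖v‖ ^ 2 ≤ ‖W.starProjection v‖ ^ 2)
    {v₀ : E} (hv₀ : v₀ ∈ U) (hv₀1 : ‖v₀‖ = 1) (hv₀lam : ‖W.starProjection v₀‖ ^ 2 = lam)
    (hK : ∃ u ∈ Wᗮ, u ≠ 0) :
    IsGreatest {x : ℝ | ∃ u : E, u ≠ 0 ∧ u ∈ Wᗮ ∧ x = ‖u‖ ^ 2 / Metric.infDist u U ^ 2}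
      (1 / lam) := by
  have hlam1 : lam ≤ 1 := by
    rw [← hv₀lam]
    exact pow_le_one₀ (norm_nonneg _) (hv₀1 ▸ W.norm_starProjection_apply_le v₀)
  obtain ⟨u₀, hu₀, hu₀0, hd⟩ := exists_infDist_sq_eq_mul_norm_sq hlow hv₀ hv₀1 hv₀lam hK hlam1
  refine ⟨⟨u₀, hu₀0, hu₀, ?_⟩, ?_⟩
  · rw [hd]
    field_simp [norm_ne_zero_iff.mpr hu₀0]
  · rintro _ ⟨u, hu0, hu, rfl⟩
    have hu2 : 0 < ‖u‖ ^ 2 := pow_pos (norm_pos_iff.mpr hu0) 2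
    have hd := mul_norm_sq_le_infDist_sq hlow hlam1 hu
    rw [div_le_div_iff₀ ((mul_pos hlam hu2).trans_le hd) hlam]
    nlinarith

end Submodule

section
variable {𝕜 E ι κ : Type*} [RCLike 𝕜] [NormedAddCommGroup E] [InnerProductSpace 𝕜 E]

lemma inner_sum_smul_right_eq_mulVec [Fintype κ] (X : ι → E) (Y : κ → E) (c : κ → 𝕜) (i : ι) :
    inner 𝕜 (X i) (∑ j, c j • Y j) = ((of fun i j => inner 𝕜 (X i) (Y j)) *ᵥ c) i := by
  simp only [inner_sum, inner_smul_right, mulVec, dotProduct, of_apply, mul_comm]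

lemma Orthonormal.norm_sum_smul_sq [Fintype κ] {V : κ → E} (hV : Orthonormal 𝕜 V) (c : κ → 𝕜) :
    ‖∑ j, c j • V j‖ ^ 2 = RCLike.re (star c ⬝ᵥ c) := by
  rw [← inner_self_eq_norm_sq (𝕜 := 𝕜), hV.inner_sum]
  rfl

lemma injective_mulVec_of_forall_inner_eq_zero [Fintype κ] {L : ι → E} {Y : κ → E}
    (hY : LinearIndependent 𝕜 Y)
    (hdisj : ∀ u, (∀ k, inner 𝕜 (L k) u = 0) → u ∈ Submodule.span 𝕜 (Set.range Y) → u = 0) :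
    Function.Injective (of fun k j => inner 𝕜 (L k) (Y j)).mulVec := by
  refine (injective_iff_map_eq_zero (of fun k j => inner 𝕜 (L k) (Y j)).mulVecLin).mpr
    fun c hc => funext (Fintype.linearIndependent_iff.mp hY c (hdisj _ (fun k => ?_) ?_))
  · rw [inner_sum_smul_right_eq_mulVec]
    exact congrFun hc k
  · exact (Submodule.mem_span_range_iff_exists_fun 𝕜).mpr ⟨c, rfl⟩

variable [Fintype ι] [DecidableEq ι] {L : ι → E}
  [(Submodule.span 𝕜 (Set.range L)).HasOrthogonalProjection]

lemma starProjection_span_range_eq_sum (hL : LinearIndependent 𝕜 L) (y : E) :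
    (Submodule.span 𝕜 (Set.range L)).starProjection y =
      ∑ k, ((gram 𝕜 L)⁻¹ *ᵥ fun k => inner 𝕜 (L k) y) k • L k := by
  refine Submodule.eq_starProjection_of_mem_orthogonal
    ((Submodule.mem_span_range_iff_exists_fun 𝕜).mpr ⟨_, rfl⟩) ?_
  rw [Submodule.mem_orthogonal_span_range_iff]
  intro k
  rw [inner_sub_right, inner_sum_smul_right_eq_mulVec]
  change _ - (gram 𝕜 L *ᵥ _) k = 0
  rw [mulVec_mulVec, mul_nonsing_inv _
    ((isUnit_iff_isUnit_det _).mp (posDef_gram_of_linearIndependent hL).isUnit),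
    one_mulVec, sub_self]

lemma norm_starProjection_span_range_sq (hL : LinearIndependent 𝕜 L) (y : E) :
    ‖(Submodule.span 𝕜 (Set.range L)).starProjection y‖ ^ 2 =
      RCLike.re (star (fun k => inner 𝕜 (L k) y) ⬝ᵥ (gram 𝕜 L)⁻¹ *ᵥ fun k => inner 𝕜 (L k) y) := by
  rw [Submodule.norm_starProjection_sq_eq_re_inner, inner_re_symm,
    starProjection_span_range_eq_sum hL]
  simp only [inner_sum, inner_smul_right, dotProduct, Pi.star_apply, RCLike.star_def,
    inner_conj_symm, mul_comm]

lemma norm_starProjection_span_range_sum_smul_sq (hL : LinearIndependent 𝕜 L) [Fintype κ]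
    (Y : κ → E) (c : κ → 𝕜) :
    ‖(Submodule.span 𝕜 (Set.range L)).starProjection (∑ j, c j • Y j)‖ ^ 2 =
      RCLike.re (star c ⬝ᵥ ((of fun k j => inner 𝕜 (L k) (Y j))ᴴ * (gram 𝕜 L)⁻¹ *
        of fun k j => inner 𝕜 (L k) (Y j)) *ᵥ c) := by
  rw [norm_starProjection_span_range_sq hL, funext (inner_sum_smul_right_eq_mulVec L Y c)]
  simp only [star_mulVec, dotProduct_mulVec, mulVec_mulVec, vecMul_vecMul, Matrix.mul_assoc]
end

theorem stmt7_general {X : Type*} [NormedAddCommGroup X] [InnerProductSpace ℂ X]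
    {m n : ℕ} (hn : 0 < n)
    (L : Fin m → X) (hL : LinearIndependent ℂ L)
    (V : Fin n → X) (hV : Orthonormal ℂ V)
    (hker : ∃ u : X, u ≠ 0 ∧ ∀ k, (inner ℂ (L k) u : ℂ) = 0)
    (hcap : ∀ u : X, (∀ k, (inner ℂ (L k) u : ℂ) = 0) →
      u ∈ Submodule.span ℂ (Set.range V) → u = 0)
    (G : Matrix (Fin m) (Fin n) ℂ) (hG : ∀ k j, G k j = (inner ℂ (L k) (V j) : ℂ))
    (H : Matrix (Fin m) (Fin m) ℂ) (hH : ∀ k j, H k j = (inner ℂ (L k) (L j) : ℂ)) :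
    (Gᴴ * H⁻¹ * G).PosDef ∧
      ∀ h : (Gᴴ * H⁻¹ * G).IsHermitian,
        sSup {x : ℝ | ∃ u : X, u ≠ 0 ∧ (∀ k, (inner ℂ (L k) u : ℂ) = 0) ∧
            x = ‖u‖ ^ 2 / (Metric.infDist u (Submodule.span ℂ (Set.range V) : Set X)) ^ 2}
          = 1 / ⨅ i, h.eigenvalues i := by
  obtain rfl : G = of fun k j => inner ℂ (L k) (V j) := ext hG
  obtain rfl : H = gram ℂ L := ext hH
  have hM := (posDef_gram_of_linearIndependent hL).inv.conjTranspose_mul_mul_same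
    (injective_mulVec_of_forall_inner_eq_zero hV.linearIndependent hcap)
  refine ⟨hM, fun h => ?_⟩
  have : Nonempty (Fin n) := ⟨⟨0, hn⟩⟩
  have := FiniteDimensional.span_of_finite ℂ (Set.finite_range L)
  have := FiniteDimensional.span_of_finite ℂ (Set.finite_range V)
  have hlow : ∀ v ∈ Submodule.span ℂ (Set.range V), (⨅ i, h.eigenvalues i) * ‖v‖ ^ 2 ≤
      ‖(Submodule.span ℂ (Set.range L)).starProjection v‖ ^ 2 := by
    intro v hv
    obtain ⟨c, rfl⟩ := (Submodule.mem_span_range_iff_exists_fun ℂ).mp hv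
    rw [norm_starProjection_span_range_sum_smul_sq hL, hV.norm_sum_smul_sq]
    exact h.iInf_eigenvalues_mul_re_dotProduct_le c
  obtain ⟨c₀, hc₀, hc₀M⟩ := h.exists_re_dotProduct_eq_iInf_eigenvalues
  have hv₀ : ‖∑ j, c₀ j • V j‖ = 1 :=
    (pow_eq_one_iff_of_nonneg (norm_nonneg _) two_ne_zero).mp (by rw [hV.norm_sum_smul_sq, hc₀])
  obtain ⟨u, hu0, hu⟩ := hker
  have := Submodule.isGreatest_norm_sq_div_infDist_sq hM.iInf_eigenvalues_pos hlow
    ((Submodule.mem_span_range_iff_exists_fun ℂ).mpr ⟨c₀, rfl⟩) hv₀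
    (by rw [norm_starProjection_span_range_sum_smul_sq hL, hc₀M])
    ⟨u, (Submodule.mem_orthogonal_span_range_iff L).mpr hu, hu0⟩
  simp only [Submodule.mem_orthogonal_span_range_iff] at this
  exact this.csSup_eq

/-- The compatibility indicator in a complex Hilbert space: for observation
functionals `ℓ_k = ⟨·, L_k⟩` with linearly independent representers `L_1,…,L_m` and an
orthonormal system `V_1,…,V_n` spanning `V`, the matrix `Gᴴ H⁻¹ G` is positive definite
and `sup {‖u‖²/dist(u,V)² : u ∈ ker L, u ≠ 0} = 1/λ_min(Gᴴ H⁻¹ G)`. -/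
theorem stmt7 {X : Type*} [NormedAddCommGroup X] [InnerProductSpace ℂ X] [CompleteSpace X]
    {m n : ℕ} (hn : 0 < n) (hnm : n ≤ m)
    (L : Fin m → X) (hL : LinearIndependent ℂ L)
    (V : Fin n → X) (hV : Orthonormal ℂ V)
    (hker : ∃ u : X, u ≠ 0 ∧ ∀ k, (inner ℂ (L k) u : ℂ) = 0)
    (hcap : ∀ u : X, (∀ k, (inner ℂ (L k) u : ℂ) = 0) →
      u ∈ Submodule.span ℂ (Set.range V) → u = 0)
    (G : Matrix (Fin m) (Fin n) ℂ) (hG : ∀ k j, G k j = (inner ℂ (L k) (V j) : ℂ))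
    (H : Matrix (Fin m) (Fin m) ℂ) (hH : ∀ k j, H k j = (inner ℂ (L k) (L j) : ℂ)) :
    (Gᴴ * H⁻¹ * G).PosDef ∧
      ∀ h : (Gᴴ * H⁻¹ * G).IsHermitian,
        sSup {x : ℝ | ∃ u : X, u ≠ 0 ∧ (∀ k, (inner ℂ (L k) u : ℂ) = 0) ∧
            x = ‖u‖ ^ 2 / (Metric.infDist u (Submodule.span ℂ (Set.range V) : Set X)) ^ 2}
          = 1 / ⨅ i, h.eigenvalues i :=
  stmt7_general hn L hL V hV hker hcap G hG H hH
end

section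
/- Fix 0 < r < 1 and integers 1 ≤ n ≤ m, and set ζ_k = r·exp(2πi(k−1)/m) for k = 1,…,m. Define G ∈ ℂ^{m×n} by G_{k,j} = ζ_k^{j−1} (k = 1,…,m, j = 1,…,n) and H ∈ ℂ^{m×m} by H_{k,j} = 1/(1 − conj(ζ_j)·ζ_k) (k, j = 1,…,m). Then H is invertible and G*H^{−1}G = (1 − r^{2m})·I_n. -/
/-!
Let `V` be the square Vandermonde matrix of the nodes. Since every node satisfies
`ζ_k ^ m = r ^ m`, the geometric sum `∑_{p < m} (conj ζ_j ζ_k) ^ p` equals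
`(1 - r ^ (2m)) / (1 - conj ζ_j ζ_k)`, i.e. `V Vᴴ = (1 - r ^ (2m)) H`. The nodes are distinct,
so `V` is invertible, and `G` consists of the first `n` columns of `V`; hence
`Gᴴ H⁻¹ G = (1 - r ^ (2m)) Eᴴ E` with `E` the column selection, and `Eᴴ E = I_n`.
-/

open Matrix

namespace Matrix

variable {K : Type*} [Field K] [StarRing K] {ι κ : Type*} [Fintype ι] [DecidableEq ι]

/-- The Gramian of the `H²(𝔻)` point-evaluation representers `z ↦ (1 - star w * z)⁻¹`. -/
def szegoMatrix {m : ℕ} (v : Fin m → K) : Matrix (Fin m) (Fin m) K :=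
  of fun k j => (1 - star (v j) * v k)⁻¹

theorem vandermonde_mul_conjTranspose_eq_smul_szegoMatrix {m : ℕ} {v : Fin m → K} {s : K}
    (hv : ∀ k, v k ^ m = s) (hs : star s * s ≠ 1) :
    vandermonde v * (vandermonde v)ᴴ = (1 - star s * s) • szegoMatrix v := by
  ext k j
  set x := star (v j) * v k
  have hxm : x ^ m = star s * s := by rw [mul_pow, ← star_pow, hv, hv]
  have hx : 1 - x ≠ 0 := sub_ne_zero.2 fun h => hs (by rw [← hxm, ← h, one_pow])
  calc ∑ p : Fin m, v k ^ (p : ℕ) * star (v j ^ (p : ℕ))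
      = ∑ p ∈ Finset.range m, x ^ p := by
        rw [Fin.sum_univ_eq_sum_range (fun p => v k ^ p * star (v j ^ p))]
        simp only [x, star_pow, mul_pow, mul_comm]
    _ = (1 - star s * s) * (1 - x)⁻¹ :=
        (eq_mul_inv_iff_mul_eq₀ hx).2 (by rw [geom_sum_mul_neg, hxm])

theorem conjTranspose_mul_inv_mul_of_mul_conjTranspose_eq_smul {F H : Matrix ι ι K}
    (hF : IsUnit F.det) {c : K} (hc : c ≠ 0) (hFH : F * Fᴴ = c • H) (E : Matrix ι κ K) :
    IsUnit H ∧ (F * E)ᴴ * H⁻¹ * (F * E) = c • (Eᴴ * E) := by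
  have hH : H = c⁻¹ • (F * Fᴴ) := by rw [hFH, smul_smul, inv_mul_cancel₀ hc, one_smul]
  have hleft : (c • ((F⁻¹)ᴴ * F⁻¹)) * H = 1 := by
    rw [hH, smul_mul_smul, mul_inv_cancel₀ hc, one_smul, Matrix.mul_assoc,
      nonsing_inv_mul_cancel_left _ _ hF, ← conjTranspose_mul, mul_nonsing_inv _ hF,
      conjTranspose_one]
  refine ⟨(isUnit_iff_isUnit_det H).2 (isUnit_det_of_left_inverse hleft), ?_⟩
  rw [inv_eq_left_inv hleft, conjTranspose_mul]
  simp only [Matrix.mul_smul, Matrix.smul_mul, Matrix.mul_assoc,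
    nonsing_inv_mul_cancel_left _ _ hF]
  rw [← Matrix.mul_assoc Fᴴ, ← conjTranspose_mul, nonsing_inv_mul _ hF, conjTranspose_one,
    Matrix.one_mul]

theorem conjTranspose_submatrix_mul_inv_mul_submatrix_of_mul_conjTranspose_eq_smul
    [Fintype κ] [DecidableEq κ] {F H : Matrix ι ι K} (hF : IsUnit F.det) {c : K} (hc : c ≠ 0)
    (hFH : F * Fᴴ = c • H) {e : κ → ι} (he : Function.Injective e) :
    IsUnit H ∧ (F.submatrix id e)ᴴ * H⁻¹ * F.submatrix id e = c • 1 := by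
  have hE : ((1 : Matrix ι ι K).submatrix id e)ᴴ * (1 : Matrix ι ι K).submatrix id e = 1 := by
    rw [conjTranspose_submatrix, conjTranspose_one,
      ← submatrix_mul _ _ _ _ _ Function.bijective_id, Matrix.one_mul]
    exact submatrix_one e he
  have hFE : F.submatrix id e = F * (1 : Matrix ι ι K).submatrix id e := by
    simpa using (mul_submatrix_one (Equiv.refl ι) e F).symm
  rw [hFE, ← hE]
  exact conjTranspose_mul_inv_mul_of_mul_conjTranspose_eq_smul hF hc hFH _

end Matrix

theorem IsPrimitiveRoot.injective_const_mul_pow {R : Type*} [CommRing R] [IsDomain R] {ω : R}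
    {m : ℕ} (hω : IsPrimitiveRoot ω m) {a : R} (ha : a ≠ 0) :
    Function.Injective fun k : Fin m => a * ω ^ (k : ℕ) :=
  fun i j h => Fin.ext (hω.pow_inj i.2 j.2 (mul_left_cancel₀ ha h))

/-- For equispaced points `ζ_k = r e^{2πi(k-1)/m}` on the circle of radius `r < 1`, the
cross-Gramian `G` of the monomials against the `H²` point-evaluation representers and
the Gramian `H` of the representers satisfy `Gᴴ H⁻¹ G = (1 - r^{2m}) I_n`. -/
theorem stmt9 (r : ℝ) (hr0 : 0 < r) (hr1 : r < 1) (m n : ℕ) (hn : 1 ≤ n) (hnm : n ≤ m)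
    (ζ : Fin m → ℂ)
    (hζ : ∀ k, ζ k = (r : ℂ) * Complex.exp (2 * Real.pi * Complex.I * (k : ℕ) / m))
    (G : Matrix (Fin m) (Fin n) ℂ) (hG : ∀ k j, G k j = ζ k ^ (j : ℕ))
    (H : Matrix (Fin m) (Fin m) ℂ)
    (hH : ∀ k j, H k j = 1 / (1 - (starRingEnd ℂ) (ζ j) * ζ k)) :
    IsUnit H ∧ Gᴴ * H⁻¹ * G = ((1 - r ^ (2 * m) : ℝ) : ℂ) • (1 : Matrix (Fin n) (Fin n) ℂ) := by
  set ω := Complex.exp (2 * Real.pi * Complex.I / m)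
  have hω : IsPrimitiveRoot ω m := Complex.isPrimitiveRoot_exp m (by omega)
  have hζω : ζ = fun k : Fin m => (r : ℂ) * ω ^ (k : ℕ) := by
    ext k
    rw [hζ, ← Complex.exp_nat_mul, mul_div_assoc', mul_comm _ (k : ℂ)]
  have hζm (k : Fin m) : ζ k ^ m = (r : ℂ) ^ m := by
    rw [hζω, mul_pow, ← pow_mul, pow_mul', hω.pow_eq_one, one_pow, mul_one]
  have hr2m : r ^ (2 * m) < 1 := pow_lt_one₀ hr0.le hr1 (by omega)
  have hrr : star ((r : ℂ) ^ m) * (r : ℂ) ^ m = ((r ^ (2 * m) : ℝ) : ℂ) := by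
    rw [star_pow, Complex.star_def, Complex.conj_ofReal, ← pow_add, two_mul]
    push_cast
    rfl
  have hFH : vandermonde ζ * (vandermonde ζ)ᴴ = ((1 - r ^ (2 * m) : ℝ) : ℂ) • H := by
    rw [vandermonde_mul_conjTranspose_eq_smul_szegoMatrix hζm
      (by rw [hrr]; exact_mod_cast hr2m.ne), hrr, Complex.ofReal_sub, Complex.ofReal_one]
    congr
    ext k j
    rw [hH, one_div]
    rfl
  have hdet : IsUnit (vandermonde ζ).det :=
    isUnit_iff_ne_zero.2 <| det_vandermonde_ne_zero_iff.2 <|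
      hζω ▸ hω.injective_const_mul_pow (by exact_mod_cast hr0.ne')
  have hGV : G = (vandermonde ζ).submatrix id (Fin.castLE hnm) := by
    ext k j
    exact hG k j
  rw [hGV]
  exact conjTranspose_submatrix_mul_inv_mul_submatrix_of_mul_conjTranspose_eq_smul hdet
    (by exact_mod_cast (sub_pos.2 hr2m).ne') hFH (Fin.castLE_injective hnm)
end

section
/- Fix 0 < r < 1 and integers 1 ≤ n ≤ m, and set ζ_k = r·exp(2πi(k−1)/m) for k = 1,…,m. Then sup{ (Σ_{j≥0} |a_j|²) / (Σ_{j≥n} |a_j|²) : a ∈ ℓ²(ℕ, ℂ), Σ_{j≥0} a_j ζ_k^j = 0 for all k = 1,…,m, and Σ_{j≥n} |a_j|² > 0 } = 1/(1 − r^{2m}). -/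
/-!
Write `q = r ^ (2m)` and `ω = exp (2πi/m)`, so that `ζ_k = r ω^k`. Averaging the `m` conditions
`F(r ω^k) = 0` against the characters `k ↦ ω^(-kt)` shows that for every residue `t` mod `m` the
series `∑_l a_{t+lm} (r^m)^l` vanishes. Solving it for `a_t` and applying Cauchy–Schwarz gives
`|a_t|² ≤ q/(1-q) · ∑_{l≥1} |a_{t+lm}|²`. For `t < n ≤ m` the indices `t + lm` (`l ≥ 1`) are
pairwise distinct and at least `n`, so the head `∑_{j<n} |a_j|²` is at most `q/(1-q)` times the
tail `∑_{j≥n} |a_j|²`, and the ratio is at most `1/(1-q)`. Equality holds for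
`F(z) = 1/(1 - r^m z^m) - 1/(1 - q)`, so the supremum is attained.
-/

open Finset

theorem Nat.add_mul_injective {m t : ℕ} (hm : 0 < m) : Function.Injective fun l => t + m * l :=
  fun _ _ h => Nat.eq_of_mul_eq_mul_left hm (Nat.add_left_cancel h)

section Residue

variable {α : Type*} {m t : ℕ}

theorem support_ite_mod_subset [Zero α] (f : ℕ → α) :
    Function.support (fun j => if j % m = t then f j else 0) ⊆ Set.range fun l => t + m * l :=
  fun j hj => by
    have h : j % m = t := by_contra fun h => hj (if_neg h)
    exact ⟨j / m, by rw [← h]; exact Nat.mod_add_div j m⟩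

theorem ite_mod_comp_add_mul [Zero α] (f : ℕ → α) (ht : t < m) :
    (fun j => if j % m = t then f j else 0) ∘ (fun l => t + m * l) = fun l => f (t + m * l) :=
  funext fun l => if_pos (by simp [Nat.mod_eq_of_lt ht])

variable [AddCommMonoid α] [TopologicalSpace α] {f : ℕ → α}

theorem hasSum_ite_mod_iff (ht : t < m) {a : α} :
    HasSum (fun j => if j % m = t then f j else 0) a ↔ HasSum (fun l => f (t + m * l)) a := by
  rw [← ite_mod_comp_add_mul f ht, (Nat.add_mul_injective (by omega)).hasSum_iff
    fun j hj => Function.notMem_support.1 (mt (support_ite_mod_subset f ·) hj)]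

theorem tsum_ite_mod (ht : t < m) :
    ∑' j, (if j % m = t then f j else 0) = ∑' l, f (t + m * l) := by
  rw [← (Nat.add_mul_injective (by omega)).tsum_eq (support_ite_mod_subset f)]
  exact congrArg tsum (ite_mod_comp_add_mul f ht)

end Residue

theorem IsPrimitiveRoot.sum_range_pow_mul {R : Type*} [CommRing R] [IsDomain R] {ω : R} {m : ℕ}
    (hω : IsPrimitiveRoot ω m) (s : ℕ) :
    ∑ k ∈ range m, ω ^ (k * s) = if m ∣ s then (m : R) else 0 := by
  simp_rw [mul_comm _ s, pow_mul]
  split_ifs with h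
  · simp [(hω.pow_eq_one_iff_dvd s).2 h]
  · have hgeom : (∑ k ∈ range m, (ω ^ s) ^ k) * (ω ^ s - 1) = 0 := by
      rw [geom_sum_mul, ← pow_mul, mul_comm, pow_mul, hω.pow_eq_one, one_pow, sub_self]
    exact (mul_eq_zero.1 hgeom).resolve_right
      (sub_ne_zero.2 fun h1 => h ((hω.pow_eq_one_iff_dvd s).1 h1))

theorem Nat.dvd_add_sub_iff_mod_eq {m t j : ℕ} (ht : t < m) : m ∣ j + (m - t) ↔ j % m = t := by
  rw [← ZMod.natCast_eq_zero_iff, Nat.cast_add, Nat.cast_sub ht.le, ZMod.natCast_self,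
    zero_sub, ← sub_eq_add_neg, sub_eq_zero, ZMod.natCast_eq_natCast_iff', Nat.mod_eq_of_lt ht]

theorem IsPrimitiveRoot.tsum_add_mul_eq_zero {ω : ℂ} {m : ℕ}
    (hω : IsPrimitiveRoot ω m) {b : ℕ → ℂ} (hb : Summable fun j => ‖b j‖)
    (h : ∀ k < m, ∑' j, b j * ω ^ (k * j) = 0) {t : ℕ} (ht : t < m) :
    ∑' l, b (t + m * l) = 0 := by
  have hω1 : ∀ s, ‖ω ^ s‖ = 1 := fun s => by
    rw [norm_pow, hω.norm'_eq_one (by omega), one_pow]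
  have hsum : ∀ k, Summable fun j => b j * ω ^ (k * j) := fun k =>
    Summable.of_norm (by simpa [hω1] using hb)
  -- `ω ^ (k * (m - t))` plays the role of `ω ^ (-k * t)`.
  have key : ∑ k ∈ range m, ω ^ (k * (m - t)) * ∑' j, b j * ω ^ (k * j) = 0 :=
    sum_eq_zero fun k hk => by rw [h k (mem_range.1 hk), mul_zero]
  simp_rw [← tsum_mul_left] at key
  rw [← Summable.tsum_finsetSum fun k _ => (hsum k).mul_left _] at key
  have hfilter : ∀ j, ∑ k ∈ range m, ω ^ (k * (m - t)) * (b j * ω ^ (k * j)) =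
      m * if j % m = t then b j else 0 := fun j => by
    simp_rw [mul_left_comm _ (b j), ← pow_add, ← mul_add, ← mul_sum, hω.sum_range_pow_mul,
      add_comm (m - t), Nat.dvd_add_sub_iff_mod_eq ht]
    split_ifs <;> ring
  simp_rw [hfilter, tsum_mul_left, tsum_ite_mod ht] at key
  exact (mul_eq_zero.1 key).resolve_left (by exact_mod_cast ht.ne_bot)

theorem sq_tsum_mul_le_tsum_sq_mul_tsum_sq {ι : Type*} {f g : ι → ℝ} (hf : ∀ i, 0 ≤ f i)
    (hg : ∀ i, 0 ≤ g i) (hf2 : Summable fun i => f i ^ 2) (hg2 : Summable fun i => g i ^ 2) :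
    (∑' i, f i * g i) ^ 2 ≤ (∑' i, f i ^ 2) * ∑' i, g i ^ 2 := by
  have h := Real.inner_le_Lp_mul_Lq_tsum_of_nonneg .two_two hf hg (by simpa using hf2)
    (by simpa using hg2)
  simp only [Real.rpow_two, ← Real.sqrt_eq_rpow] at h
  calc (∑' i, f i * g i) ^ 2
      ≤ (√(∑' i, f i ^ 2) * √(∑' i, g i ^ 2)) ^ 2 :=
        pow_le_pow_left₀ (tsum_nonneg fun i => mul_nonneg (hf i) (hg i)) h 2
    _ = (∑' i, f i ^ 2) * ∑' i, g i ^ 2 := by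
        rw [mul_pow, Real.sq_sqrt (tsum_nonneg fun i => sq_nonneg _),
          Real.sq_sqrt (tsum_nonneg fun i => sq_nonneg _)]

theorem summable_norm_mul_pow_of_summable_sq {a : ℕ → ℂ} (ha : Summable fun j => ‖a j‖ ^ 2)
    {z : ℂ} (hz : ‖z‖ < 1) : Summable fun j => ‖a j * z ^ j‖ := by
  have hgeom : Summable fun j => (‖z‖ ^ j) ^ 2 :=
    (summable_geometric_of_lt_one (sq_nonneg ‖z‖)
      (pow_lt_one₀ (norm_nonneg z) hz two_ne_zero)).congr fun j => by ring
  simpa only [norm_mul, norm_pow] using Real.summable_mul_of_Lp_Lq_of_nonneg .two_two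
    (fun _ => norm_nonneg _) (fun _ => by positivity) (by simpa using ha) (by simpa using hgeom)

theorem norm_sq_le_of_tsum_mul_pow_eq_zero {d : ℕ → ℂ} (hd : Summable fun l => ‖d l‖ ^ 2)
    {z : ℂ} (hz : ‖z‖ < 1) (h : ∑' l, d l * z ^ l = 0) :
    ‖d 0‖ ^ 2 ≤ ‖z‖ ^ 2 / (1 - ‖z‖ ^ 2) * ∑' l, ‖d (l + 1)‖ ^ 2 := by
  have hnorm := (summable_nat_add_iff 1).2 (summable_norm_mul_pow_of_summable_sq hd hz)
  have hgeom : HasSum (fun l => (‖z‖ ^ (l + 1)) ^ 2) (‖z‖ ^ 2 * (1 - ‖z‖ ^ 2)⁻¹) :=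
    ((hasSum_geometric_of_lt_one (sq_nonneg ‖z‖)
      (pow_lt_one₀ (norm_nonneg z) hz two_ne_zero)).mul_left (‖z‖ ^ 2)).congr_fun fun l => by ring
  have hd0 : d 0 = -∑' l, d (l + 1) * z ^ (l + 1) := by
    rw [(summable_norm_mul_pow_of_summable_sq hd hz).of_norm.tsum_eq_zero_add] at h
    simpa using eq_neg_of_add_eq_zero_left h
  calc ‖d 0‖ ^ 2 ≤ (∑' l, ‖d (l + 1)‖ * ‖z‖ ^ (l + 1)) ^ 2 := by
        rw [hd0, norm_neg]
        gcongr
        simpa only [norm_mul, norm_pow] using norm_tsum_le_tsum_norm hnorm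
    _ ≤ (∑' l, ‖d (l + 1)‖ ^ 2) * ∑' l, (‖z‖ ^ (l + 1)) ^ 2 :=
        sq_tsum_mul_le_tsum_sq_mul_tsum_sq (fun _ => norm_nonneg _) (fun _ => by positivity)
          ((summable_nat_add_iff 1).2 hd) hgeom.summable
    _ = ‖z‖ ^ 2 / (1 - ‖z‖ ^ 2) * ∑' l, ‖d (l + 1)‖ ^ 2 := by
        rw [hgeom.tsum_eq, ← div_eq_mul_inv, mul_comm]

theorem sum_range_tsum_add_mul_succ_le {f : ℕ → ℝ} (hf : Summable f) (hf0 : ∀ j, 0 ≤ f j)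
    {m n : ℕ} (hnm : n ≤ m) :
    ∑ t ∈ range n, ∑' l, f (t + m * (l + 1)) ≤ ∑' j, f (j + n) := by
  have hg : Summable fun j => f (j + n) := (summable_nat_add_iff n).2 hf
  let i : Fin n × ℕ → ℕ := fun p => p.1 + m * p.2 + (m - n)
  have hi : Function.Injective i := by
    rintro ⟨t₁, l₁⟩ ⟨t₂, l₂⟩ h
    have h' : (t₁ : ℕ) + m * l₁ = t₂ + m * l₂ := by
      change (t₁ : ℕ) + m * l₁ + (m - n) = t₂ + m * l₂ + (m - n) at h; omega
    have hdivmod (t : Fin n) (l : ℕ) : (t + m * l) / m = l ∧ (t + m * l) % m = t :=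
      (Nat.div_mod_unique (by omega)).2 ⟨rfl, t.2.trans_le hnm⟩
    obtain ⟨hl₁, ht₁⟩ := hdivmod t₁ l₁
    obtain ⟨hl₂, ht₂⟩ := hdivmod t₂ l₂
    rw [h'] at hl₁ ht₁
    exact Prod.ext (Fin.ext (ht₁.symm.trans ht₂)) (hl₁.symm.trans hl₂)
  have hcomp (p : Fin n × ℕ) : f (i p + n) = f (p.1 + m * (p.2 + 1)) :=
    congrArg f (by simp only [i]; rw [Nat.mul_succ]; omega)
  have hsum : Summable fun p => f (i p + n) := hg.comp_injective hi
  calc ∑ t ∈ range n, ∑' l, f (t + m * (l + 1))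
      = ∑ t : Fin n, ∑' l, f (i (t, l) + n) := by
        rw [← Fin.sum_univ_eq_sum_range]; simp only [hcomp]
    _ = ∑' p, f (i p + n) := by rw [hsum.tsum_prod' hsum.prod_factor, tsum_fintype]
    _ ≤ ∑' j, f (j + n) := tsum_comp_le_tsum_of_inj hg (fun j => hf0 _) hi

theorem tsum_norm_sq_le_of_tsum_mul_pow_eq_zero {ω : ℂ} {m n : ℕ} (hω : IsPrimitiveRoot ω m)
    (hm : 0 < m) (hnm : n ≤ m) {r : ℝ} (hr0 : 0 < r) (hr1 : r < 1) {a : ℕ → ℂ}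
    (ha : Summable fun j => ‖a j‖ ^ 2) (hev : ∀ k < m, ∑' j, a j * (r * ω ^ k) ^ j = 0) :
    ∑' j, ‖a j‖ ^ 2 ≤ (1 - r ^ (2 * m))⁻¹ * ∑' j, ‖a (j + n)‖ ^ 2 := by
  set q := r ^ (2 * m)
  have hq1 : q < 1 := pow_lt_one₀ hr0.le hr1 (by omega)
  have hnorm_r (s : ℕ) : ‖(r : ℂ) ^ s‖ = r ^ s := by
    rw [norm_pow, Complex.norm_real, Real.norm_of_nonneg hr0.le]
  have hres (t : ℕ) (ht : t < m) : ∑' l, a (t + m * l) * ((r : ℂ) ^ m) ^ l = 0 := by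
    have h := hω.tsum_add_mul_eq_zero (b := fun j => a j * (r : ℂ) ^ j)
      (summable_norm_mul_pow_of_summable_sq ha (by rwa [← pow_one (r : ℂ), hnorm_r, pow_one]))
      (fun k hk => by simpa only [mul_pow, ← pow_mul, mul_comm k, mul_assoc] using hev k hk) ht
    simp_rw [pow_add, pow_mul, mul_left_comm _ ((r : ℂ) ^ t), tsum_mul_left] at h
    exact (mul_eq_zero.1 h).resolve_left (pow_ne_zero _ (by exact_mod_cast hr0.ne'))
  have hhead (t : ℕ) (ht : t < n) :
      ‖a t‖ ^ 2 ≤ q / (1 - q) * ∑' l, ‖a (t + m * (l + 1))‖ ^ 2 := by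
    have h := norm_sq_le_of_tsum_mul_pow_eq_zero (d := fun l => a (t + m * l))
      (ha.comp_injective (Nat.add_mul_injective hm))
      (by rw [hnorm_r]; exact pow_lt_one₀ hr0.le hr1 hm.ne') (hres t (by omega))
    rwa [hnorm_r, ← pow_mul, mul_comm m 2, mul_zero, add_zero] at h
  have hq : 0 ≤ q / (1 - q) := div_nonneg (by positivity) (by linarith)
  calc ∑' j, ‖a j‖ ^ 2 = ∑ t ∈ range n, ‖a t‖ ^ 2 + ∑' j, ‖a (j + n)‖ ^ 2 :=
        (ha.sum_add_tsum_nat_add n).symm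
    _ ≤ q / (1 - q) * ∑ t ∈ range n, ∑' l, ‖a (t + m * (l + 1))‖ ^ 2 +
          ∑' j, ‖a (j + n)‖ ^ 2 := by
        rw [mul_sum]
        gcongr with t ht
        exact hhead t (mem_range.1 ht)
    _ ≤ q / (1 - q) * ∑' j, ‖a (j + n)‖ ^ 2 + ∑' j, ‖a (j + n)‖ ^ 2 := by
        gcongr
        exact sum_range_tsum_add_mul_succ_le ha (fun _ => sq_nonneg _) hnm
    _ = (1 - q)⁻¹ * ∑' j, ‖a (j + n)‖ ^ 2 := by
        field_simp [(by linarith : 1 - q ≠ 0)]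
        ring

theorem hasSum_ite_mod_eq_zero_pow {K : Type*} [NormedDivisionRing K] {m : ℕ} (hm : 0 < m)
    {w : K} (hw : ‖w ^ m‖ < 1) :
    HasSum (fun j => if j % m = 0 then w ^ j else 0) (1 - w ^ m)⁻¹ :=
  (hasSum_ite_mod_iff hm).2 <| by
    simpa only [zero_add, pow_mul] using hasSum_geometric_of_norm_lt_one hw

noncomputable def extremalCoeff (m : ℕ) (r : ℝ) (j : ℕ) : ℝ :=
  (if j % m = 0 then r ^ j else 0) - if j = 0 then (1 - r ^ (2 * m))⁻¹ else 0

section Extremal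

variable {m n : ℕ} {r : ℝ}

theorem hasSum_extremalCoeff_mul_pow {ζ : ℂ} (hm : 0 < m) (hr0 : 0 ≤ r) (hr1 : r < 1)
    (hζ : ζ ^ m = (r : ℂ) ^ m) :
    HasSum (fun j => (extremalCoeff m r j : ℂ) * ζ ^ j) 0 := by
  have hq : ((r : ℂ) * ζ) ^ m = (r ^ (2 * m) : ℝ) := by
    push_cast; rw [mul_pow, hζ, ← pow_add, two_mul]
  have hq1 : ‖((r : ℂ) * ζ) ^ m‖ < 1 := by
    rw [hq, Complex.norm_real, Real.norm_of_nonneg (by positivity)]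
    exact pow_lt_one₀ hr0 hr1 (by omega)
  have h := (hasSum_ite_mod_eq_zero_pow hm hq1).sub
    (hasSum_ite_eq 0 (((1 - r ^ (2 * m))⁻¹ : ℝ) : ℂ))
  rw [hq, ← Complex.ofReal_one, ← Complex.ofReal_sub, ← Complex.ofReal_inv, sub_self] at h
  refine h.congr_fun fun j => ?_
  simp only [extremalCoeff]
  push_cast
  split_ifs <;> simp_all [mul_pow]

theorem hasSum_extremalCoeff_sq_nat_add (hn : 1 ≤ n) (hnm : n ≤ m) (hr0 : 0 ≤ r) (hr1 : r < 1) :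
    HasSum (fun j => extremalCoeff m r (j + n) ^ 2) ((1 - r ^ (2 * m))⁻¹ - 1) := by
  have hw : ‖(r ^ 2) ^ m‖ < 1 := by
    rw [← pow_mul, Real.norm_of_nonneg (by positivity)]
    exact pow_lt_one₀ hr0 hr1 (by omega)
  have hsq : HasSum (fun j => (if j % m = 0 then r ^ j else 0) ^ 2) (1 - r ^ (2 * m))⁻¹ := by
    have h := hasSum_ite_mod_eq_zero_pow (m := m) (by omega) hw
    rw [← pow_mul] at h
    exact h.congr_fun fun j => by split_ifs <;> ring
  have hhead : ∑ j ∈ range n, (if j % m = 0 then r ^ j else 0) ^ 2 = 1 := by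
    rw [sum_eq_single_of_mem 0 (mem_range.2 (by omega)) fun j hj hj0 => ?_]
    · simp
    · rw [Nat.mod_eq_of_lt ((mem_range.1 hj).trans_le hnm), if_neg hj0, sq, zero_mul]
  have htail := (hasSum_nat_add_iff' n).2 hsq
  rw [hhead] at htail
  exact htail.congr_fun fun j => by simp [extremalCoeff, show n ≠ 0 by omega]

theorem hasSum_extremalCoeff_sq (hm : 0 < m) (hr0 : 0 ≤ r) (hr1 : r < 1) :
    HasSum (fun j => extremalCoeff m r j ^ 2)
      ((1 - r ^ (2 * m))⁻¹ - 1 + (1 - (1 - r ^ (2 * m))⁻¹) ^ 2) := by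
  have h0 : extremalCoeff m r 0 = 1 - (1 - r ^ (2 * m))⁻¹ := by simp [extremalCoeff]
  refine (hasSum_nat_add_iff' 1).1 ?_
  rw [sum_range_one, h0, add_sub_cancel_right]
  exact hasSum_extremalCoeff_sq_nat_add le_rfl hm hr0 hr1

end Extremal

/-- The squared compatibility indicator `μ_{H²}(ker(L_ζ), 𝒫_n)²` for evaluations at the
`m` equispaced points `ζ_k = r e^{2πi(k-1)/m}` equals `1/(1 - r^{2m})`, identifying `H²`
with `ℓ²(ℕ, ℂ)` via Taylor coefficients. -/
theorem stmt11 (r : ℝ) (hr0 : 0 < r) (hr1 : r < 1) (m n : ℕ) (hn : 1 ≤ n) (hnm : n ≤ m)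
    (ζ : Fin m → ℂ)
    (hζ : ∀ k, ζ k = (r : ℂ) * Complex.exp (2 * Real.pi * Complex.I * (k : ℕ) / m)) :
    sSup {x : ℝ | ∃ a : ℕ → ℂ, Summable (fun j : ℕ => ‖a j‖ ^ 2) ∧
        (∀ k, ∑' j : ℕ, a j * ζ k ^ j = 0) ∧
        0 < ∑' j : ℕ, ‖a (j + n)‖ ^ 2 ∧
        x = (∑' j : ℕ, ‖a j‖ ^ 2) / ∑' j : ℕ, ‖a (j + n)‖ ^ 2}
      = 1 / (1 - r ^ (2 * m)) := by
  have hm : 0 < m := by omega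
  set ω := Complex.exp (2 * Real.pi * Complex.I / m)
  have hω : IsPrimitiveRoot ω m := Complex.isPrimitiveRoot_exp m hm.ne'
  have hζω (k : Fin m) : ζ k = r * ω ^ (k : ℕ) := by
    rw [hζ, ← Complex.exp_nat_mul]; congr 2; ring
  have hq1 : r ^ (2 * m) < 1 := pow_lt_one₀ hr0.le hr1 (by omega)
  have hnorm (j : ℕ) : ‖(extremalCoeff m r j : ℂ)‖ ^ 2 = extremalCoeff m r j ^ 2 := by
    rw [Complex.norm_real, Real.norm_eq_abs, sq_abs]
  have htotal := hasSum_extremalCoeff_sq hm hr0.le hr1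
  have htail := hasSum_extremalCoeff_sq_nat_add hn hnm hr0.le hr1
  have htail0 : 0 < (1 - r ^ (2 * m))⁻¹ - 1 := by
    rw [sub_pos, one_lt_inv₀ (by linarith)]; linarith [pow_pos hr0 (2 * m)]
  refine IsGreatest.csSup_eq ⟨⟨fun j => extremalCoeff m r j, ?_, fun k => ?_, ?_, ?_⟩, ?_⟩
  · simpa only [hnorm] using htotal.summable
  · refine (hasSum_extremalCoeff_mul_pow hm hr0.le hr1 ?_).tsum_eq
    rw [hζω, mul_pow, ← pow_mul, mul_comm (k : ℕ) m, pow_mul, hω.pow_eq_one, one_pow, mul_one]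
  · simpa only [hnorm, htail.tsum_eq]
  · simp only [hnorm, htail.tsum_eq, htotal.tsum_eq]
    have h1q : 1 - r ^ (2 * m) ≠ 0 := by linarith
    field_simp
    ring
  · rintro x ⟨a, ha, hev, hpos, rfl⟩
    rw [div_le_iff₀ hpos, one_div]
    exact tsum_norm_sq_le_of_tsum_mul_pow_eq_zero hω hm hnm hr0 hr1 ha fun k hk => by
      simpa [hζω] using hev ⟨k, hk⟩
end

section
/- Fix 0 < r < 1 and a positive integer m. For a = (a_j)_{j≥0} ∈ ℓ²(ℕ, ℂ), let P_m a be the sequence with (P_m a)_ℓ = Σ_{t≥0} a_{ℓ+tm} r^{tm} for 0 ≤ ℓ ≤ m−1 and (P_m a)_j = 0 for j ≥ m. Then Σ_{j≥0} |a_j − (P_m a)_j|² ≤ (1/(1 − r^{2m})) · Σ_{j≥m} |a_j|². -/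
/-! For `j < m` the error `a_j - (P_m a)_j = -∑_{t ≥ 1} a_{j+tm} r^{tm}` is bounded by
Cauchy–Schwarz: `|a_j - (P_m a)_j|² ≤ ρ/(1-ρ) · ∑_{t ≥ 1} |a_{j+tm}|²` with `ρ = r^{2m}`, while for
`j ≥ m` the error is `a_j` itself. Over the residues `j < m` the sums `∑_{t ≥ 1} |a_{j+tm}|²` add
up to the tail `∑_{j ≥ m} |a_j|²`, so the total error is at most `(ρ/(1-ρ) + 1)` times the tail. -/

open Finset

theorem tsum_eq_sum_range_tsum_add_mul {E : Type*} [NormedAddCommGroup E] [CompleteSpace E]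
    {g : ℕ → E} (hg : Summable g) (m : ℕ) [NeZero m] :
    ∑' n, g n = ∑ j ∈ range m, ∑' t, g (j + t * m) := by
  let e : Fin m × ℕ ≃ ℕ := (Equiv.prodComm _ _).trans (Nat.divModEquiv m).symm
  have he : ∀ p, e p = p.1 + p.2 * m := fun p => add_comm _ _
  have hge : Summable fun p => g (e p) := e.summable_iff.2 hg
  rw [← e.tsum_eq, hge.tsum_prod, tsum_fintype,
    ← Fin.sum_univ_eq_sum_range (fun j => ∑' t, g (j + t * m))]
  simp only [he]

theorem Real.summable_mul_and_sq_tsum_mul_le {ι : Type*} {f g : ι → ℝ} (hf : ∀ i, 0 ≤ f i)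
    (hg : ∀ i, 0 ≤ g i) (hf2 : Summable fun i => f i ^ 2) (hg2 : Summable fun i => g i ^ 2) :
    Summable (fun i => f i * g i) ∧
      (∑' i, f i * g i) ^ 2 ≤ (∑' i, f i ^ 2) * ∑' i, g i ^ 2 := by
  have hfg : Summable fun i => f i * g i :=
    ((hf2.add hg2).div_const 2).of_nonneg_of_le (fun i => mul_nonneg (hf i) (hg i))
      fun i => by linarith [two_mul_le_add_sq (f i) (g i)]
  refine ⟨hfg, ?_⟩
  have hbound : ∑' i, f i * g i ≤ √(∑' i, f i ^ 2) * √(∑' i, g i ^ 2) :=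
    Real.tsum_le_of_sum_le (fun i => mul_nonneg (hf i) (hg i)) fun s =>
      (Real.sum_mul_le_sqrt_mul_sqrt s f g).trans <| by
        gcongr
        · exact hf2.sum_le_tsum s fun i _ => sq_nonneg _
        · exact hg2.sum_le_tsum s fun i _ => sq_nonneg _
  calc (∑' i, f i * g i) ^ 2 ≤ (√(∑' i, f i ^ 2) * √(∑' i, g i ^ 2)) ^ 2 :=
        pow_le_pow_left₀ (tsum_nonneg fun i => mul_nonneg (hf i) (hg i)) hbound 2
    _ = (∑' i, f i ^ 2) * ∑' i, g i ^ 2 := by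
        rw [mul_pow, Real.sq_sqrt (tsum_nonneg fun _ => sq_nonneg _),
          Real.sq_sqrt (tsum_nonneg fun _ => sq_nonneg _)]

theorem hasSum_sq_pow_succ {x : ℝ} (hx0 : 0 ≤ x) (hx1 : x < 1) :
    HasSum (fun t : ℕ => (x ^ (t + 1)) ^ 2) (x ^ 2 / (1 - x ^ 2)) := by
  have hx2 : x ^ 2 < 1 := pow_lt_one₀ hx0 hx1 two_ne_zero
  have hsq : (fun t : ℕ => (x ^ (t + 1)) ^ 2) = fun t => x ^ 2 * (x ^ 2) ^ t :=
    funext fun t => by ring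
  rw [hsq, div_eq_mul_inv]
  exact (hasSum_geometric_of_lt_one (sq_nonneg x) hx2).mul_left (x ^ 2)

theorem norm_sub_tsum_mul_pow_sq_le {𝕜 : Type*} [NormedField 𝕜] [CompleteSpace 𝕜] {b : ℕ → 𝕜}
    (hb : Summable fun t => ‖b t‖ ^ 2) {q : 𝕜} (hq : ‖q‖ < 1) :
    ‖b 0 - ∑' t, b t * q ^ t‖ ^ 2 ≤ ‖q‖ ^ 2 / (1 - ‖q‖ ^ 2) * ∑' t, ‖b (t + 1)‖ ^ 2 := by
  have hgeom := hasSum_sq_pow_succ (norm_nonneg q) hq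
  have hb1 : Summable fun t => ‖b (t + 1)‖ ^ 2 := (summable_nat_add_iff 1).2 hb
  obtain ⟨hsum, hcs⟩ := Real.summable_mul_and_sq_tsum_mul_le (fun t => norm_nonneg (b (t + 1)))
    (fun t => by positivity) hb1 hgeom.summable
  have hnorm : ∀ t, ‖b (t + 1) * q ^ (t + 1)‖ = ‖b (t + 1)‖ * ‖q‖ ^ (t + 1) := fun t => by
    rw [norm_mul, norm_pow]
  have htail : Summable fun t => ‖b (t + 1) * q ^ (t + 1)‖ := by simpa only [hnorm] using hsum
  have hconv : Summable fun t => b t * q ^ t := (summable_nat_add_iff 1).1 htail.of_norm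
  rw [hconv.tsum_eq_zero_add, pow_zero, mul_one, sub_add_cancel_left, norm_neg]
  calc ‖∑' t, b (t + 1) * q ^ (t + 1)‖ ^ 2 ≤ (∑' t, ‖b (t + 1)‖ * ‖q‖ ^ (t + 1)) ^ 2 := by
        gcongr
        simpa only [hnorm] using norm_tsum_le_tsum_norm htail
    _ ≤ (∑' t, ‖b (t + 1)‖ ^ 2) * ∑' t, (‖q‖ ^ (t + 1)) ^ 2 := hcs
    _ = ‖q‖ ^ 2 / (1 - ‖q‖ ^ 2) * ∑' t, ‖b (t + 1)‖ ^ 2 := by rw [hgeom.tsum_eq, mul_comm]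

theorem norm_sub_tsum_mul_pow_mul_sq_le {a : ℕ → ℂ} (ha : Summable fun j => ‖a j‖ ^ 2)
    {r : ℝ} (hr0 : 0 ≤ r) (hr1 : r < 1) {m : ℕ} (hm : 0 < m) (j : ℕ) :
    ‖a j - ∑' t, a (j + t * m) * (r : ℂ) ^ (t * m)‖ ^ 2 ≤
      r ^ (2 * m) / (1 - r ^ (2 * m)) * ∑' t, ‖a (j + t * m + m)‖ ^ 2 := by
  have hnorm : ‖(r : ℂ) ^ m‖ = r ^ m := by rw [norm_pow, Complex.norm_real, Real.norm_of_nonneg hr0]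
  have hb : Summable fun t => ‖a (j + t * m)‖ ^ 2 :=
    ha.comp_injective fun s t h => Nat.eq_of_mul_eq_mul_right hm (Nat.add_left_cancel h)
  have hq : ‖(r : ℂ) ^ m‖ < 1 := by rw [hnorm]; exact pow_lt_one₀ hr0 hr1 hm.ne'
  have h := norm_sub_tsum_mul_pow_sq_le hb hq
  rw [hnorm, ← pow_mul, mul_comm m 2] at h
  simpa only [zero_mul, add_zero, ← pow_mul, mul_comm m, add_one_mul, ← add_assoc] using h

/-- The interpolation operator `P_m` at the `m` equispaced points on the circle of
radius `r` acts as a near-best approximation from polynomials of degree `< m` on `H²`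
(identified with `ℓ²(ℕ, ℂ)`): `‖a - P_m a‖² ≤ (1/(1-r^{2m})) Σ_{j≥m} |a_j|²`. -/
theorem stmt13 (r : ℝ) (hr0 : 0 < r) (hr1 : r < 1) (m : ℕ) (hm : 0 < m)
    (a : ℕ → ℂ) (ha : Summable (fun j : ℕ => ‖a j‖ ^ 2))
    (Pa : ℕ → ℂ)
    (hPa : ∀ j : ℕ, Pa j =
      if j < m then ∑' t : ℕ, a (j + t * m) * (r : ℂ) ^ (t * m) else 0) :
    Summable (fun j : ℕ => ‖a j - Pa j‖ ^ 2) ∧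
      ∑' j : ℕ, ‖a j - Pa j‖ ^ 2 ≤ (1 / (1 - r ^ (2 * m))) * ∑' j : ℕ, ‖a (j + m)‖ ^ 2 := by
  have : NeZero m := ⟨hm.ne'⟩
  have hρ : r ^ (2 * m) < 1 := pow_lt_one₀ hr0.le hr1 (by omega)
  have hS : Summable fun j => ‖a (j + m)‖ ^ 2 := (summable_nat_add_iff m).2 ha
  have htail : ∀ j, ‖a (j + m) - Pa (j + m)‖ ^ 2 = ‖a (j + m)‖ ^ 2 := fun j => by
    rw [hPa, if_neg (by omega), sub_zero]
  have hsum : Summable fun j => ‖a j - Pa j‖ ^ 2 :=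
    (summable_nat_add_iff m).1 (by simpa only [htail] using hS)
  refine ⟨hsum, ?_⟩
  rw [← hsum.sum_add_tsum_nat_add m, tsum_congr htail]
  calc ∑ j ∈ range m, ‖a j - Pa j‖ ^ 2 + ∑' j, ‖a (j + m)‖ ^ 2
      ≤ ∑ j ∈ range m, r ^ (2 * m) / (1 - r ^ (2 * m)) * ∑' t, ‖a (j + t * m + m)‖ ^ 2
          + ∑' j, ‖a (j + m)‖ ^ 2 := by
        gcongr with j hj
        rw [hPa, if_pos (mem_range.1 hj)]
        exact norm_sub_tsum_mul_pow_mul_sq_le ha hr0.le hr1 hm j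
    _ = (r ^ (2 * m) / (1 - r ^ (2 * m)) + 1) * ∑' j, ‖a (j + m)‖ ^ 2 := by
        rw [← mul_sum, ← tsum_eq_sum_range_tsum_add_mul hS m, add_one_mul]
    _ = 1 / (1 - r ^ (2 * m)) * ∑' j, ‖a (j + m)‖ ^ 2 := by
        field_simp [(sub_pos.2 hρ).ne']
        ring
end

section
/- Let ζ_0, ζ_1, …, ζ_m be distinct points on the unit circle {z ∈ ℂ : |z| = 1} and let a_1, …, a_m ∈ ℂ. Then sup{ |F(ζ_0) − Σ_{k=1}^m a_k F(ζ_k)| : F ∈ A(𝔻), ‖F‖_∞ ≤ 1 } = 1 + Σ_{k=1}^m |a_k|. -/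
/-!
The upper bound is the triangle inequality. For the lower bound take the targets `w₀ = 1` and
`w_k = -conj a_k / |a_k|`, so that `w₀ - Σ a_k w_k = 1 + Σ |a_k|`, and interpolate them approximately
by a polynomial of sup norm at most `1` on the disc. The peak function `p_u(z) = (1 + ū z) / 2` of a
point `u` of the circle satisfies `|p_u(z)| ≤ 1 - |z - u|² / 8`, so there is `q < 1` such that at
every point of the disc at most one of the `p_{ζ_j}` exceeds `q` in modulus. Hence
`Σ_j w_j p_{ζ_j}ⁿ`, divided by `1 + (m + 1) qⁿ`, has sup norm at most `1` and is within
`2 (m + 1) qⁿ` of `w_j` at `ζ_j`.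
-/

open Complex ComplexConjugate Metric Finset Filter Topology

/-- `F` belongs to the disc algebra `A(𝔻)`: continuous on the closed unit disc and
holomorphic on the open unit disc. -/
def MemDiscAlgebra (F : ℂ → ℂ) : Prop :=
  ContinuousOn F (Metric.closedBall 0 1) ∧ DifferentiableOn ℂ F (Metric.ball 0 1)

noncomputable def peakFunction (u z : ℂ) : ℂ := (1 + conj u * z) / 2

namespace peakFunction

@[fun_prop]
theorem differentiable (u : ℂ) : Differentiable ℂ (peakFunction u) := by
  unfold peakFunction
  fun_prop

theorem apply_self {u : ℂ} (hu : ‖u‖ = 1) : peakFunction u u = 1 := by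
  rw [peakFunction, conj_mul', hu]
  norm_num

theorem norm_le {u z : ℂ} (hu : ‖u‖ = 1) (hz : ‖z‖ ≤ 1) :
    ‖peakFunction u z‖ ≤ 1 - ‖z - u‖ ^ 2 / 8 := by
  set v := conj u * z
  have hv : ‖v‖ ≤ 1 := by simpa [v, hu] using hz
  -- multiplying by the unimodular `u` turns `1 - ū z` into `u - z`
  have hsub : ‖1 - v‖ = ‖z - u‖ := by
    rw [← one_mul ‖1 - v‖, ← hu, ← norm_mul, norm_sub_rev z u]
    congr 1
    rw [mul_sub, mul_one, ← mul_assoc, mul_conj', hu]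
    simp
  have hzu : ‖z - u‖ ≤ 2 := by
    linarith [norm_sub_le z u, norm_nonneg z]
  have hpar := parallelogram_law_with_norm ℝ (1 : ℂ) v
  rw [hsub, norm_one] at hpar
  have hsq : ‖peakFunction u z‖ ^ 2 ≤ (1 - ‖z - u‖ ^ 2 / 8) ^ 2 := by
    have : ‖peakFunction u z‖ = ‖1 + v‖ / 2 := by simp [peakFunction, v]
    rw [this]
    nlinarith [norm_nonneg v, sq_nonneg (‖z - u‖ ^ 2)]
  exact (pow_le_pow_iff_left₀ (norm_nonneg _) (by nlinarith [norm_nonneg (z - u)])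
    two_ne_zero).1 hsq

theorem norm_le_one {u z : ℂ} (hu : ‖u‖ = 1) (hz : ‖z‖ ≤ 1) : ‖peakFunction u z‖ ≤ 1 :=
  (norm_le hu hz).trans (by linarith [sq_nonneg ‖z - u‖])

theorem norm_le_or {u v z : ℂ} (hu : ‖u‖ = 1) (hv : ‖v‖ = 1) (hz : ‖z‖ ≤ 1) :
    ‖peakFunction u z‖ ≤ 1 - ‖u - v‖ ^ 2 / 32 ∨ ‖peakFunction v z‖ ≤ 1 - ‖u - v‖ ^ 2 / 32 := by
  have htri : ‖u - v‖ ≤ ‖z - u‖ + ‖z - v‖ := by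
    simpa [norm_sub_rev z u] using norm_sub_le_norm_sub_add_norm_sub u z v
  rcases le_total (‖u - v‖ / 2) ‖z - u‖ with h | h
  · left
    nlinarith [norm_le hu hz, norm_nonneg (u - v)]
  · right
    nlinarith [norm_le hv hz, norm_nonneg (u - v)]

end peakFunction

theorem exists_pos_le_dist_of_injective {ι X : Type*} [Finite ι] [MetricSpace X]
    {ξ : ι → X} (hinj : Function.Injective ξ) :
    ∃ δ > 0, ∀ i j, i ≠ j → δ ≤ dist (ξ i) (ξ j) := by
  have hsmall : ∀ᶠ δ in 𝓝[>] (0 : ℝ), ∀ p : ι × ι, p.1 ≠ p.2 → δ ≤ dist (ξ p.1) (ξ p.2) := by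
    refine eventually_all.2 fun p => ?_
    by_cases hp : p.1 = p.2
    · exact Eventually.of_forall fun _ h => absurd hp h
    · have hpos : 0 < dist (ξ p.1) (ξ p.2) := dist_pos.2 (hinj.ne hp)
      exact ((eventually_lt_nhds hpos).filter_mono nhdsWithin_le_nhds).mono fun _ h _ => h.le
  obtain ⟨δ, hδ, hpos⟩ := (hsmall.and self_mem_nhdsWithin).exists
  exact ⟨δ, hpos, fun i j hij => hδ (i, j) hij⟩

theorem exists_peakFunction_separation {ι : Type*} [Finite ι] {ξ : ι → ℂ}
    (hξ : ∀ i, ‖ξ i‖ = 1) (hinj : Function.Injective ξ) :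
    ∃ q, 0 ≤ q ∧ q < 1 ∧ ∀ i j, i ≠ j → ∀ z, ‖z‖ ≤ 1 →
      ‖peakFunction (ξ i) z‖ ≤ q ∨ ‖peakFunction (ξ j) z‖ ≤ q := by
  obtain ⟨δ, hδ, hsep⟩ := exists_pos_le_dist_of_injective hinj
  set δ' := min δ 1
  have hδ' : 0 < δ' := lt_min hδ one_pos
  refine ⟨1 - δ' ^ 2 / 32, by nlinarith [min_le_right δ 1], by nlinarith, fun i j hij z hz => ?_⟩
  have hle : 1 - ‖ξ i - ξ j‖ ^ 2 / 32 ≤ 1 - δ' ^ 2 / 32 := by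
    have := (min_le_left δ 1).trans ((hsep i j hij).trans_eq (dist_eq_norm _ _))
    nlinarith
  exact (peakFunction.norm_le_or (hξ i) (hξ j) hz).imp hle.trans' hle.trans'

theorem Finset.sum_le_one_add_card_mul {ι : Type*} [Fintype ι] {f : ι → ℝ} {t : ℝ} (ht : 0 ≤ t)
    (hf : ∀ i, f i ≤ 1) (hsep : ∀ i j, i ≠ j → f i ≤ t ∨ f j ≤ t) :
    ∑ i, f i ≤ 1 + Fintype.card ι * t := by
  classical
  have hconst : ∑ _i : ι, t = Fintype.card ι * t := by simp
  by_cases hbig : ∃ j, t < f j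
  · obtain ⟨j, hj⟩ := hbig
    have hrest : ∀ i ∈ univ.erase j, f i ≤ t := fun i hi =>
      (hsep i j (ne_of_mem_erase hi)).resolve_right hj.not_ge
    calc ∑ i, f i = f j + ∑ i ∈ univ.erase j, f i := (add_sum_erase _ _ (mem_univ j)).symm
      _ ≤ 1 + ∑ _i ∈ univ.erase j, t := add_le_add (hf j) (sum_le_sum hrest)
      _ ≤ 1 + ∑ _i : ι, t :=
        add_le_add le_rfl (sum_le_sum_of_subset_of_nonneg (erase_subset j univ) fun _ _ _ => ht)
      _ = 1 + Fintype.card ι * t := by rw [hconst]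
  · push Not at hbig
    calc ∑ i, f i ≤ ∑ _i : ι, t := sum_le_sum fun i _ => hbig i
      _ ≤ 1 + Fintype.card ι * t := by rw [hconst]; linarith

theorem norm_inv_smul_sub_le {E : Type*} [SeminormedAddCommGroup E] [NormedSpace ℝ E]
    {x w : E} {B η : ℝ} (hB : 1 ≤ B) (hw : ‖w‖ ≤ 1) (hx : ‖x - w‖ ≤ η) :
    ‖B⁻¹ • x - w‖ ≤ η + (B - 1) := by
  have hB0 : 0 < B := one_pos.trans_le hB
  have hBinv : B⁻¹ ≤ 1 := inv_le_one_of_one_le₀ hB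
  have hsplit : B⁻¹ • x - w = B⁻¹ • (x - w) - (1 - B⁻¹) • w := by
    rw [smul_sub, sub_smul, one_smul]; abel
  have hx' : B⁻¹ * ‖x - w‖ ≤ η := (mul_le_of_le_one_left (norm_nonneg _) hBinv).trans hx
  have hw' : (1 - B⁻¹) * ‖w‖ ≤ B - 1 := by
    refine (mul_le_of_le_one_right (sub_nonneg.2 hBinv) hw).trans ?_
    nlinarith [mul_inv_cancel₀ hB0.ne']
  calc ‖B⁻¹ • x - w‖ ≤ ‖B⁻¹ • (x - w)‖ + ‖(1 - B⁻¹) • w‖ := hsplit ▸ norm_sub_le _ _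
    _ = B⁻¹ * ‖x - w‖ + (1 - B⁻¹) * ‖w‖ := by
        rw [norm_smul, norm_smul, Real.norm_of_nonneg (inv_nonneg.2 hB0.le),
          Real.norm_of_nonneg (sub_nonneg.2 hBinv)]
    _ ≤ η + (B - 1) := add_le_add hx' hw'

theorem norm_sum_mul_peakFunction_pow_le {ι : Type*} [Fintype ι] {ξ w : ι → ℂ} {q : ℝ}
    (hξ : ∀ i, ‖ξ i‖ = 1) (hw : ∀ i, ‖w i‖ ≤ 1) (hq : 0 ≤ q)
    (hsep : ∀ i j, i ≠ j → ∀ z, ‖z‖ ≤ 1 →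
      ‖peakFunction (ξ i) z‖ ≤ q ∨ ‖peakFunction (ξ j) z‖ ≤ q)
    (n : ℕ) {z : ℂ} (hz : ‖z‖ ≤ 1) :
    ‖∑ i, w i * peakFunction (ξ i) z ^ n‖ ≤ 1 + Fintype.card ι * q ^ n := by
  calc ‖∑ i, w i * peakFunction (ξ i) z ^ n‖ ≤ ∑ i, ‖peakFunction (ξ i) z‖ ^ n := by
        refine (norm_sum_le _ _).trans (sum_le_sum fun i _ => ?_)
        rw [norm_mul, norm_pow]
        exact mul_le_of_le_one_left (by positivity) (hw i)
    _ ≤ 1 + Fintype.card ι * q ^ n :=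
        sum_le_one_add_card_mul (pow_nonneg hq n)
          (fun i => pow_le_one₀ (norm_nonneg _) (peakFunction.norm_le_one (hξ i) hz))
          fun i j hij => (hsep i j hij z hz).imp
            (fun h => pow_le_pow_left₀ (norm_nonneg _) h n)
            (fun h => pow_le_pow_left₀ (norm_nonneg _) h n)

theorem norm_sum_mul_peakFunction_pow_sub_le {ι : Type*} [Fintype ι] {ξ w : ι → ℂ} {q : ℝ}
    (hξ : ∀ i, ‖ξ i‖ = 1) (hw : ∀ i, ‖w i‖ ≤ 1) (hq₀ : 0 ≤ q) (hq : q < 1)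
    (hsep : ∀ i j, i ≠ j → ∀ z, ‖z‖ ≤ 1 →
      ‖peakFunction (ξ i) z‖ ≤ q ∨ ‖peakFunction (ξ j) z‖ ≤ q)
    (n : ℕ) (j : ι) :
    ‖∑ i, w i * peakFunction (ξ i) (ξ j) ^ n - w j‖ ≤ Fintype.card ι * q ^ n := by
  classical
  have hother : ∀ i ∈ univ.erase j, ‖w i * peakFunction (ξ i) (ξ j) ^ n‖ ≤ q ^ n := by
    intro i hi
    have hpeak : ‖peakFunction (ξ i) (ξ j)‖ ≤ q :=
      (hsep i j (ne_of_mem_erase hi) (ξ j) (hξ j).le).resolve_right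
        (by rw [peakFunction.apply_self (hξ j), norm_one]; exact hq.not_ge)
    rw [norm_mul, norm_pow]
    exact mul_le_of_le_one_left (by positivity) (hw i) |>.trans
      (pow_le_pow_left₀ (norm_nonneg _) hpeak n)
  rw [← add_sum_erase _ _ (mem_univ j), peakFunction.apply_self (hξ j), one_pow, mul_one,
    add_sub_cancel_left]
  calc ‖∑ i ∈ univ.erase j, w i * peakFunction (ξ i) (ξ j) ^ n‖
      ≤ ∑ _i ∈ univ.erase j, q ^ n := (norm_sum_le _ _).trans (sum_le_sum hother)
    _ ≤ ∑ _i : ι, q ^ n :=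
      sum_le_sum_of_subset_of_nonneg (erase_subset j univ) fun _ _ _ => by positivity
    _ = Fintype.card ι * q ^ n := by simp

theorem exists_differentiable_approx_interpolation {ι : Type*} [Fintype ι] {ξ : ι → ℂ}
    (hξ : ∀ i, ‖ξ i‖ = 1) (hinj : Function.Injective ξ) {w : ι → ℂ} (hw : ∀ i, ‖w i‖ ≤ 1)
    {ε : ℝ} (hε : 0 < ε) :
    ∃ F : ℂ → ℂ, Differentiable ℂ F ∧ (∀ z, ‖z‖ ≤ 1 → ‖F z‖ ≤ 1) ∧
      ∀ i, ‖F (ξ i) - w i‖ ≤ ε := by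
  obtain ⟨q, hq0, hq1, hsep⟩ := exists_peakFunction_separation hξ hinj
  have hlim : Tendsto (fun n => 2 * Fintype.card ι * q ^ n) atTop (𝓝 0) := by
    simpa using
      (tendsto_pow_atTop_nhds_zero_of_lt_one hq0 hq1).const_mul (2 * (Fintype.card ι : ℝ))
  obtain ⟨n, hn⟩ := (hlim.eventually_lt_const hε).exists
  set B := 1 + Fintype.card ι * q ^ n
  have hB : 1 ≤ B := le_add_of_nonneg_right (by positivity)
  refine ⟨fun z => B⁻¹ • ∑ i, w i * peakFunction (ξ i) z ^ n, ?_, fun z hz => ?_, fun j => ?_⟩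
  · fun_prop
  · have hB0 : 0 < B := one_pos.trans_le hB
    rw [norm_smul, Real.norm_of_nonneg (inv_nonneg.2 hB0.le), inv_mul_le_one₀ hB0]
    exact norm_sum_mul_peakFunction_pow_le hξ hw hq0 hsep n hz
  · refine (norm_inv_smul_sub_le hB (hw j)
      (norm_sum_mul_peakFunction_pow_sub_le hξ hw hq0 hq1 hsep n j)).trans ?_
    simp only [B]
    linarith

theorem norm_sub_sum_mul_le {ι R : Type*} [Fintype ι] [SeminormedRing R] (a x : ι → R)
    {x₀ : R} {r : ℝ} (h₀ : ‖x₀‖ ≤ r) (h : ∀ k, ‖x k‖ ≤ r) :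
    ‖x₀ - ∑ k, a k * x k‖ ≤ r * (1 + ∑ k, ‖a k‖) := by
  have hr : 0 ≤ r := (norm_nonneg _).trans h₀
  calc ‖x₀ - ∑ k, a k * x k‖ ≤ ‖x₀‖ + ∑ k, ‖a k * x k‖ :=
        (norm_sub_le _ _).trans (add_le_add le_rfl (norm_sum_le _ _))
    _ ≤ r + ∑ k, ‖a k‖ * r :=
        add_le_add h₀ (sum_le_sum fun k _ => (norm_mul_le _ _).trans (by gcongr; exact h k))
    _ = r * (1 + ∑ k, ‖a k‖) := by rw [← sum_mul]; ring

theorem le_norm_sub_sum_mul {ι : Type*} [Fintype ι] {a w x : ι → ℂ} {x₀ : ℂ} {η : ℝ}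
    (hw : ∀ k, a k * w k = -‖a k‖) (h₀ : ‖x₀ - 1‖ ≤ η) (h : ∀ k, ‖x k - w k‖ ≤ η) :
    (1 - η) * (1 + ∑ k, ‖a k‖) ≤ ‖x₀ - ∑ k, a k * x k‖ := by
  set S := 1 + ∑ k, ‖a k‖
  have hS : 0 ≤ S := by positivity
  have hval : 1 - ∑ k, a k * w k = (S : ℂ) := by
    simp only [hw, sum_neg_distrib, sub_neg_eq_add, S]
    push_cast
    rfl
  have hsplit : x₀ - ∑ k, a k * x k
      = (1 - ∑ k, a k * w k) - -((x₀ - 1) - ∑ k, a k * (x k - w k)) := by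
    simp only [mul_sub, sum_sub_distrib]
    ring
  have herr := norm_sub_sum_mul_le a (fun k => x k - w k) h₀ h
  calc (1 - η) * S = ‖(S : ℂ)‖ - η * S := by
        rw [Complex.norm_real, Real.norm_of_nonneg hS]; ring
    _ ≤ ‖x₀ - ∑ k, a k * x k‖ := by
        rw [hsplit, hval]
        refine le_trans ?_ (norm_sub_norm_le _ _)
        rw [norm_neg]
        linarith

-- Also true at `a = 0`, where `-conj a / ‖a‖ = 0 / 0 = 0`.
theorem mul_neg_conj_div_norm (a : ℂ) : a * (-conj a / ‖a‖) = -‖a‖ := by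
  rw [mul_div_assoc', mul_neg, mul_conj', pow_two, neg_div, mul_div_assoc]
  rcases eq_or_ne a 0 with rfl | ha
  · simp
  · rw [div_self (ofReal_ne_zero.2 (norm_ne_zero_iff.2 ha)), mul_one]

theorem norm_neg_conj_div_norm_le (a : ℂ) : ‖-conj a / ‖a‖‖ ≤ 1 := by
  simpa [norm_neg, Complex.norm_conj] using div_self_le_one ‖a‖

/-- The dual norm in `A(𝔻)*` of `e_{ζ_0} - Σ_k a_k e_{ζ_k}` for distinct points on the
unit circle equals `1 + Σ_k |a_k|` (via the Rudin–Carleson theorem). -/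
theorem stmt14 {m : ℕ} (ζ₀ : ℂ) (ζ : Fin m → ℂ)
    (hζ₀ : ‖ζ₀‖ = 1) (hζ : ∀ k, ‖ζ k‖ = 1)
    (hinj : Function.Injective ζ) (hζ₀ζ : ∀ k, ζ₀ ≠ ζ k)
    (a : Fin m → ℂ) :
    sSup {x : ℝ | ∃ F : ℂ → ℂ, MemDiscAlgebra F ∧
        (∀ z ∈ Metric.closedBall (0 : ℂ) 1, ‖F z‖ ≤ 1) ∧
        x = ‖F ζ₀ - ∑ k, a k * F (ζ k)‖}
      = 1 + ∑ k, ‖a k‖ := by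
  set A := {x : ℝ | ∃ F : ℂ → ℂ, MemDiscAlgebra F ∧
    (∀ z ∈ Metric.closedBall (0 : ℂ) 1, ‖F z‖ ≤ 1) ∧ x = ‖F ζ₀ - ∑ k, a k * F (ζ k)‖}
  set S := 1 + ∑ k, ‖a k‖
  have hS : 0 < S := by positivity
  have hupper : ∀ x ∈ A, x ≤ S := by
    rintro _ ⟨F, -, hF, rfl⟩
    simpa using norm_sub_sum_mul_le a (fun k => F (ζ k)) (hF ζ₀ (by simp [hζ₀]))
      fun k => hF _ (by simp [hζ k])
  refine le_antisymm (Real.sSup_le hupper hS.le) (le_of_forall_pos_le_add fun ε hε => ?_)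
  have hξ : ∀ i, ‖(Fin.cons ζ₀ ζ : Fin (m + 1) → ℂ) i‖ = 1 := Fin.forall_fin_succ.2 ⟨hζ₀, hζ⟩
  have hξinj : Function.Injective (Fin.cons ζ₀ ζ : Fin (m + 1) → ℂ) :=
    Fin.cons_injective_iff.2 ⟨fun ⟨k, hk⟩ => hζ₀ζ k hk.symm, hinj⟩
  have hw : ∀ i, ‖(Fin.cons 1 fun k => -conj (a k) / ‖a k‖ : Fin (m + 1) → ℂ) i‖ ≤ 1 :=
    Fin.forall_fin_succ.2 ⟨by simp, fun k => norm_neg_conj_div_norm_le (a k)⟩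
  obtain ⟨F, hFd, hF1, hFw⟩ := exists_differentiable_approx_interpolation hξ hξinj hw
    (div_pos hε hS)
  have hFmem : ‖F ζ₀ - ∑ k, a k * F (ζ k)‖ ∈ A :=
    ⟨F, ⟨hFd.continuous.continuousOn, hFd.differentiableOn⟩,
      fun z hz => hF1 z (mem_closedBall_zero_iff.1 hz), rfl⟩
  have hlower := le_norm_sub_sum_mul (fun k => mul_neg_conj_div_norm (a k))
    (by simpa using hFw 0) (fun k => by simpa using hFw k.succ)
  calc S = (1 - ε / S) * S + ε := by field_simp; ring
    _ ≤ sSup A + ε := add_le_add (hlower.trans (le_csSup ⟨S, hupper⟩ hFmem)) le_rfl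
end

section
/- Let 𝒱 be a finite-dimensional linear subspace of the disc algebra A(𝔻), let ζ_0, ζ_1, …, ζ_m be distinct points on the unit circle, and assume no nonzero element of 𝒱 vanishes at all of ζ_1, …, ζ_m. Suppose a⋆ ∈ ℂ^m minimizes Σ_{k=1}^m |a_k| over all a ∈ ℂ^m satisfying Σ_{k=1}^m a_k V(ζ_k) = V(ζ_0) for every V ∈ 𝒱. Then sup{ |F(ζ_0)| / dist_∞(F, 𝒱) : F ∈ A(𝔻), F ≠ 0, F(ζ_1) = ⋯ = F(ζ_m) = 0 } = 1 + Σ_{k=1}^m |a⋆_k|. -/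
/-- The sup norm over the closed unit disc. -/
noncomputable def supNorm (F : ℂ → ℂ) : ℝ :=
  ⨆ z : Metric.closedBall (0 : ℂ) 1, ‖F (z : ℂ)‖

/-- The sup-norm distance from `F` to a subspace `𝒱` of functions. -/
noncomputable def distSup (F : ℂ → ℂ) (𝒱 : Submodule ℂ (ℂ → ℂ)) : ℝ :=
  ⨅ V : 𝒱, supNorm (F - (V : ℂ → ℂ))

open Finset Metric Filter Topology ComplexConjugate

theorem StrongDual.apply_eq_sum_mul_apply_single {𝕜 ι : Type*} [RCLike 𝕜] [Fintype ι]
    [DecidableEq ι] (g : StrongDual 𝕜 (ι → 𝕜)) (y : ι → 𝕜) :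
    g y = ∑ k, y k * g (Pi.single k 1) := by
  conv_lhs => rw [← univ_sum_single y]
  simp only [map_sum]
  congr 1 with k
  rw [← smul_eq_mul, ← map_smul, ← Pi.single_smul, smul_eq_mul, mul_one]

theorem StrongDual.sum_norm_apply_single_le_opNorm {𝕜 ι : Type*} [RCLike 𝕜] [Fintype ι]
    [DecidableEq ι] (g : StrongDual 𝕜 (ι → 𝕜)) : ∑ k, ‖g (Pi.single k 1)‖ ≤ ‖g‖ := by
  set b : ι → 𝕜 := fun k => g (Pi.single k 1)
  set y : ι → 𝕜 := fun k => conj (b k) / ‖b k‖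
  have hy : ‖y‖ ≤ 1 := (pi_norm_le_iff_of_nonneg zero_le_one).2 fun k => by
    simp only [y, norm_div, RCLike.norm_conj, RCLike.norm_ofReal, abs_norm]
    exact div_self_le_one _
  have hgy : g y = ((∑ k, ‖b k‖ : ℝ) : 𝕜) := by
    rw [g.apply_eq_sum_mul_apply_single, RCLike.ofReal_sum]
    refine sum_congr rfl fun k _ => ?_
    rcases eq_or_ne (b k) 0 with hb | hb
    · simp [y, hb]
    · rw [div_mul_eq_mul_div, RCLike.conj_mul, sq, mul_div_assoc,
        div_self (RCLike.ofReal_ne_zero.2 (norm_ne_zero_iff.2 hb)), mul_one]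
  calc ∑ k, ‖b k‖ = ‖g y‖ := by
        rw [hgy, RCLike.norm_ofReal, abs_of_nonneg (sum_nonneg fun k _ => norm_nonneg _)]
    _ ≤ ‖g‖ * ‖y‖ := g.le_opNorm y
    _ ≤ ‖g‖ := mul_le_of_le_one_right (norm_nonneg _) hy

theorem Submodule.exists_norm_le_one_lt_norm_sum_mul {𝕜 ι : Type*} [RCLike 𝕜] [Fintype ι]
    (W : Submodule 𝕜 (ι → 𝕜)) (a : ι → 𝕜)
    (ha : ∀ b : ι → 𝕜, (∀ y ∈ W, ∑ k, b k * y k = ∑ k, a k * y k) →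
      ∑ k, ‖a k‖ ≤ ∑ k, ‖b k‖)
    {r : ℝ} (hr : r < ∑ k, ‖a k‖) : ∃ y ∈ W, ‖y‖ ≤ 1 ∧ r < ‖∑ k, a k * y k‖ := by
  classical
  let ℓ : (ι → 𝕜) →ₗ[𝕜] 𝕜 := ∑ k, a k • LinearMap.proj k
  have hℓ : ∀ y, ℓ y = ∑ k, a k * y k := fun y => by simp [ℓ]
  let f : StrongDual 𝕜 W := LinearMap.toContinuousLinearMap (ℓ ∘ₗ W.subtype)
  obtain ⟨g, hgf, hg⟩ := exists_extension_norm_eq W f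
  have hrep : ∀ y ∈ W, ∑ k, g (Pi.single k 1) * y k = ∑ k, a k * y k := fun y hy => by
    simp_rw [mul_comm (g _)]
    rw [← g.apply_eq_sum_mul_apply_single, ← hℓ]
    exact hgf ⟨y, hy⟩
  have hf : r < ‖f‖ := calc
    r < ∑ k, ‖a k‖ := hr
    _ ≤ ∑ k, ‖g (Pi.single k 1)‖ := ha _ hrep
    _ ≤ ‖f‖ := hg ▸ g.sum_norm_apply_single_le_opNorm
  obtain ⟨y, hy, hry⟩ := f.exists_lt_apply_of_lt_opNorm hf
  exact ⟨y, y.2, hy.le, by simpa [f, hℓ] using hry⟩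

theorem Submodule.exists_mem_norm_apply_le_one_lt_norm {𝕜 α ι : Type*} [RCLike 𝕜] [Fintype ι]
    (𝒱 : Submodule 𝕜 (α → 𝕜)) (x₀ : α) (x : ι → α) (a : ι → 𝕜)
    (hrep : ∀ V ∈ 𝒱, ∑ k, a k * V (x k) = V x₀)
    (hmin : ∀ b : ι → 𝕜, (∀ V ∈ 𝒱, ∑ k, b k * V (x k) = V x₀) → ∑ k, ‖a k‖ ≤ ∑ k, ‖b k‖)
    {r : ℝ} (hr : r < ∑ k, ‖a k‖) : ∃ V ∈ 𝒱, (∀ k, ‖V (x k)‖ ≤ 1) ∧ r < ‖V x₀‖ := by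
  obtain ⟨_, ⟨V, hV, rfl⟩, hy, hry⟩ :=
    (𝒱.map (LinearMap.funLeft 𝕜 𝕜 x)).exists_norm_le_one_lt_norm_sum_mul a
      (fun b hb => hmin b fun V hV => (hb _ ⟨V, hV, rfl⟩).trans (hrep V hV)) hr
  refine ⟨V, hV, fun k => (norm_le_pi_norm _ k).trans hy, ?_⟩
  simpa [LinearMap.funLeft, hrep V hV] using hry

theorem IsCompact.eventually_forall_pow_mul_le {X : Type*} [TopologicalSpace X] {K : Set X}
    (hK : IsCompact K) {f g : X → ℝ} (hf : ContinuousOn f K) (hg : ContinuousOn g K)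
    (hf0 : ∀ x ∈ K, 0 ≤ f x) (hf1 : ∀ x ∈ K, f x < 1) {δ : ℝ} (hδ : 0 < δ) :
    ∀ᶠ N : ℕ in atTop, ∀ x ∈ K, f x ^ N * g x ≤ δ := by
  rcases K.eq_empty_or_nonempty with rfl | hne
  · simp
  obtain ⟨x₀, hx₀, hmax⟩ := hK.exists_isMaxOn hne hf
  obtain ⟨C, hC⟩ := hK.exists_bound_of_continuousOn hg
  have hlim : Tendsto (fun N : ℕ => f x₀ ^ N * C) atTop (𝓝 0) := by
    simpa using (tendsto_pow_atTop_nhds_zero_of_lt_one (hf0 x₀ hx₀) (hf1 x₀ hx₀)).mul_const C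
  filter_upwards [hlim.eventually (ge_mem_nhds hδ)] with N hN x hx
  calc f x ^ N * g x ≤ f x ^ N * ‖g x‖ :=
        mul_le_mul_of_nonneg_left (Real.le_norm_self _) (pow_nonneg (hf0 x hx) N)
    _ ≤ f x₀ ^ N * C :=
        mul_le_mul (pow_le_pow_left₀ (hf0 x hx) (hmax hx) N) (hC x hx) (norm_nonneg _)
          (pow_nonneg (hf0 x₀ hx₀) N)
    _ ≤ δ := hN

noncomputable def circlePeak (p z : ℂ) : ℂ := (1 + conj p * z) / 2

@[fun_prop]
theorem differentiable_circlePeak (p : ℂ) : Differentiable ℂ (circlePeak p) := by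
  unfold circlePeak
  fun_prop

theorem circlePeak_self {p : ℂ} (hp : ‖p‖ = 1) : circlePeak p p = 1 := by
  rw [circlePeak, Complex.conj_mul', hp]
  norm_num

theorem circlePeak_eq_midpoint (p z : ℂ) :
    circlePeak p z = (1 / 2 : ℝ) • (1 : ℂ) + (1 / 2 : ℝ) • (conj p * z) := by
  simp only [circlePeak, Complex.real_smul]
  push_cast
  ring

theorem norm_conj_mul_le_one {p z : ℂ} (hp : ‖p‖ ≤ 1) (hz : ‖z‖ ≤ 1) : ‖conj p * z‖ ≤ 1 := by
  rw [norm_mul, Complex.norm_conj]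
  exact mul_le_one₀ hp (norm_nonneg z) hz

theorem norm_circlePeak_le_one {p z : ℂ} (hp : ‖p‖ ≤ 1) (hz : ‖z‖ ≤ 1) : ‖circlePeak p z‖ ≤ 1 := by
  rw [circlePeak, norm_div, Complex.norm_two, div_le_one two_pos]
  exact (norm_add_le _ _).trans (by rw [norm_one]; linarith [norm_conj_mul_le_one hp hz])

theorem norm_circlePeak_lt_one {p z : ℂ} (hp : ‖p‖ = 1) (hz : ‖z‖ ≤ 1) (hzp : z ≠ p) :
    ‖circlePeak p z‖ < 1 := by
  rw [circlePeak_eq_midpoint]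
  refine norm_combo_lt_of_ne norm_one.le (norm_conj_mul_le_one hp.le hz) (fun h => hzp ?_)
    (by norm_num) (by norm_num) (by norm_num)
  calc z = p * conj p * z := by rw [Complex.mul_conj', hp]; simp
    _ = p := by rw [mul_assoc, ← h, mul_one]

theorem exists_forall_norm_sum_mul_circlePeak_pow_mul_le {ι : Type*} [Fintype ι] {p : ι → ℂ}
    (hp : ∀ i, ‖p i‖ = 1) {l : ι → ℂ → ℂ} (hl : ∀ i, Continuous (l i)) {C : ℝ} (hC : 1 ≤ C)
    (hlp : ∀ i, ∑ j, ‖l j (p i)‖ < C) :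
    ∃ N : ℕ, ∀ w : ι → ℂ, (∀ i, ‖w i‖ ≤ 1) → ∀ z, ‖z‖ ≤ 1 →
      ‖∑ i, w i * circlePeak (p i) z ^ N * l i z‖ ≤ C := by
  set S : ℂ → ℝ := fun z => ∑ i, ‖l i z‖
  have hS : Continuous S := by fun_prop
  -- Where `S < C` the sum is bounded by `S`; on the rest `K` of the disc every peak function
  -- has modulus `< 1`, so its high powers absorb `S`.
  set K := closedBall (0 : ℂ) 1 ∩ {z | C ≤ S z}
  have hK : IsCompact K := (isCompact_closedBall 0 1).inter_right (isClosed_le continuous_const hS)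
  have hpeak : ∀ i, ∀ z ∈ K, ‖circlePeak (p i) z‖ < 1 := by
    rintro i z ⟨hz, hSz⟩
    refine norm_circlePeak_lt_one (hp i) (mem_closedBall_zero_iff.1 hz) fun hzp => ?_
    exact (hlp i).not_ge (hzp ▸ hSz)
  obtain ⟨N, hN⟩ : ∃ N : ℕ, ∀ i, ∀ z ∈ K,
      ‖circlePeak (p i) z‖ ^ N * ‖l i z‖ ≤ (Fintype.card ι + 1 : ℝ)⁻¹ :=
    (eventually_all.2 fun i => hK.eventually_forall_pow_mul_le
      (differentiable_circlePeak _).continuous.norm.continuousOn (hl i).norm.continuousOn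
      (fun _ _ => norm_nonneg _) (hpeak i) (by positivity)).exists
  refine ⟨N, fun w hw z hz => ?_⟩
  have hsum : ‖∑ i, w i * circlePeak (p i) z ^ N * l i z‖ ≤
      ∑ i, ‖circlePeak (p i) z‖ ^ N * ‖l i z‖ := by
    refine (norm_sum_le _ _).trans (sum_le_sum fun i _ => ?_)
    rw [norm_mul, norm_mul, norm_pow]
    exact mul_le_mul_of_nonneg_right (mul_le_of_le_one_left (by positivity) (hw i))
      (norm_nonneg _)
  refine hsum.trans ?_
  by_cases hzK : z ∈ K
  · calc ∑ i, ‖circlePeak (p i) z‖ ^ N * ‖l i z‖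
          ≤ Fintype.card ι * (Fintype.card ι + 1 : ℝ)⁻¹ := by
          simpa using sum_le_card_nsmul univ _ _ fun i _ => hN i z hzK
      _ ≤ C := by
          rw [← div_eq_mul_inv, div_le_iff₀ (by positivity)]
          nlinarith
  · have hSz : S z < C := lt_of_not_ge fun h => hzK ⟨mem_closedBall_zero_iff.2 hz, h⟩
    refine le_trans (sum_le_sum fun i _ => ?_) hSz.le
    exact mul_le_of_le_one_left (norm_nonneg _)
      (pow_le_one₀ (norm_nonneg _) (norm_circlePeak_le_one (hp i).le hz))

theorem exists_differentiable_interpolate_norm_le {ι : Type*} [Fintype ι] {p : ι → ℂ}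
    (hp : ∀ i, ‖p i‖ = 1) (hpinj : Function.Injective p) {w : ι → ℂ} (hw : ∀ i, ‖w i‖ ≤ 1)
    {ε : ℝ} (hε : 0 < ε) :
    ∃ φ : ℂ → ℂ, Differentiable ℂ φ ∧ (∀ i, φ (p i) = w i) ∧
      ∀ z, ‖z‖ ≤ 1 → ‖φ z‖ ≤ 1 + ε := by
  classical
  set l : ι → ℂ → ℂ := fun i z => (Lagrange.basis univ p i).eval z
  have hl : ∀ i j, l i (p j) = if i = j then 1 else 0 := by
    intro i j
    split_ifs with hij
    · subst hij
      exact Lagrange.eval_basis_self hpinj.injOn (mem_univ i)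
    · exact Lagrange.eval_basis_of_ne hij (mem_univ j)
  obtain ⟨N, hN⟩ := exists_forall_norm_sum_mul_circlePeak_pow_mul_le hp
    (l := l) (C := 1 + ε) (fun i => Polynomial.continuous _) (by linarith)
    (fun i => by simpa [hl, apply_ite norm] using hε)
  refine ⟨fun z => ∑ i, w i * circlePeak (p i) z ^ N * l i z, by fun_prop, fun j => ?_,
    hN w hw⟩
  simp [hl, circlePeak_self (hp j)]

instance : Nonempty (closedBall (0 : ℂ) 1) := ⟨⟨0, mem_closedBall_self zero_le_one⟩⟩

theorem norm_le_supNorm {G : ℂ → ℂ} (hG : ContinuousOn G (closedBall 0 1)) {z : ℂ}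
    (hz : ‖z‖ ≤ 1) : ‖G z‖ ≤ supNorm G := by
  obtain ⟨C, hC⟩ := (isCompact_closedBall (0 : ℂ) 1).exists_bound_of_continuousOn hG
  refine le_ciSup (f := fun w : closedBall (0 : ℂ) 1 => ‖G w‖) ⟨C, ?_⟩
    ⟨z, mem_closedBall_zero_iff.2 hz⟩
  rintro _ ⟨w, rfl⟩
  simpa using hC w w.2

theorem supNorm_nonneg (G : ℂ → ℂ) : 0 ≤ supNorm G :=
  Real.iSup_nonneg fun _ => norm_nonneg _

theorem supNorm_le {G : ℂ → ℂ} {C : ℝ} (h : ∀ z, ‖z‖ ≤ 1 → ‖G z‖ ≤ C) : supNorm G ≤ C :=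
  ciSup_le fun z => h z (mem_closedBall_zero_iff.1 z.2)

theorem distSup_nonneg (F : ℂ → ℂ) (𝒱 : Submodule ℂ (ℂ → ℂ)) : 0 ≤ distSup F 𝒱 :=
  Real.iInf_nonneg fun _ => supNorm_nonneg _

theorem distSup_le_supNorm_sub (F : ℂ → ℂ) {𝒱 : Submodule ℂ (ℂ → ℂ)} {V : ℂ → ℂ}
    (hV : V ∈ 𝒱) : distSup F 𝒱 ≤ supNorm (F - V) :=
  ciInf_le (f := fun V : 𝒱 => supNorm (F - (V : ℂ → ℂ)))
    ⟨0, by rintro _ ⟨V, rfl⟩; exact supNorm_nonneg _⟩ ⟨V, hV⟩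

theorem norm_apply_le_mul_supNorm_sub {ι : Type*} [Fintype ι] {F V : ℂ → ℂ}
    (hF : ContinuousOn F (closedBall 0 1)) (hV : ContinuousOn V (closedBall 0 1))
    {ζ₀ : ℂ} {ζ : ι → ℂ} (hζ₀ : ‖ζ₀‖ ≤ 1) (hζ : ∀ k, ‖ζ k‖ ≤ 1) (hFζ : ∀ k, F (ζ k) = 0)
    {a : ι → ℂ} (hVrep : ∑ k, a k * V (ζ k) = V ζ₀) :
    ‖F ζ₀‖ ≤ (1 + ∑ k, ‖a k‖) * supNorm (F - V) := by
  have hG : ∀ z, ‖z‖ ≤ 1 → ‖(F - V) z‖ ≤ supNorm (F - V) := fun _ => norm_le_supNorm (hF.sub hV)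
  have hFζ₀ : F ζ₀ = (F - V) ζ₀ - ∑ k, a k * (F - V) (ζ k) := by
    simp [hFζ, hVrep]
  calc ‖F ζ₀‖ ≤ ‖(F - V) ζ₀‖ + ∑ k, ‖a k‖ * ‖(F - V) (ζ k)‖ := by
        rw [hFζ₀]
        refine (norm_sub_le _ _).trans (add_le_add_right ((norm_sum_le _ _).trans ?_) _)
        simp only [norm_mul, le_refl]
    _ ≤ supNorm (F - V) + ∑ k, ‖a k‖ * supNorm (F - V) := by
        gcongr with k
        exacts [hG _ hζ₀, hG _ (hζ k)]
    _ = (1 + ∑ k, ‖a k‖) * supNorm (F - V) := by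
        rw [← sum_mul]
        ring

theorem norm_apply_le_mul_distSup {ι : Type*} [Fintype ι] {𝒱 : Submodule ℂ (ℂ → ℂ)}
    (h𝒱 : ∀ V ∈ 𝒱, MemDiscAlgebra V) {F : ℂ → ℂ} (hF : MemDiscAlgebra F) {ζ₀ : ℂ}
    {ζ : ι → ℂ} (hζ₀ : ‖ζ₀‖ ≤ 1) (hζ : ∀ k, ‖ζ k‖ ≤ 1) (hFζ : ∀ k, F (ζ k) = 0)
    {a : ι → ℂ} (hrep : ∀ V ∈ 𝒱, ∑ k, a k * V (ζ k) = V ζ₀) :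
    ‖F ζ₀‖ ≤ (1 + ∑ k, ‖a k‖) * distSup F 𝒱 := by
  rw [distSup, Real.mul_iInf_of_nonneg (by positivity)]
  exact le_ciInf fun V =>
    norm_apply_le_mul_supNorm_sub hF.1 (h𝒱 V V.2).1 hζ₀ hζ hFζ (hrep V V.2)

theorem MemDiscAlgebra.exists_vanishing_norm_apply_eq_add_one {m : ℕ} {ζ₀ : ℂ} {ζ : Fin m → ℂ}
    (hζ₀ : ‖ζ₀‖ = 1) (hζ : ∀ k, ‖ζ k‖ = 1) (hinj : Function.Injective ζ)
    (hζ₀ζ : ∀ k, ζ₀ ≠ ζ k) {V : ℂ → ℂ} (hV : MemDiscAlgebra V) (hVζ : ∀ k, ‖V (ζ k)‖ ≤ 1)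
    {ε : ℝ} (hε : 0 < ε) :
    ∃ F, MemDiscAlgebra F ∧ (∀ k, F (ζ k) = 0) ∧ ‖F ζ₀‖ = ‖V ζ₀‖ + 1 ∧
      supNorm (F - V) ≤ 1 + ε := by
  set u := Complex.exp ((V ζ₀).arg * Complex.I)
  have hu : ‖u‖ = 1 := Complex.norm_exp_ofReal_mul_I _
  obtain ⟨φ, hφ, hφζ, hφle⟩ := exists_differentiable_interpolate_norm_le
    (p := Fin.cons ζ₀ ζ) (w := Fin.cons u fun k => -V (ζ k))
    (Fin.cases hζ₀ hζ) (Fin.cons_injective_iff.2 ⟨fun ⟨k, hk⟩ => hζ₀ζ k hk.symm, hinj⟩)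
    (Fin.cases hu.le fun k => (norm_neg (V (ζ k))).le.trans (hVζ k)) hε
  refine ⟨V + φ, ⟨hV.1.add hφ.continuous.continuousOn, hV.2.add hφ.differentiableOn⟩,
    fun k => ?_, ?_, ?_⟩
  · simpa using congrArg (V (ζ k) + ·) (hφζ k.succ)
  · have hφζ₀ : φ ζ₀ = u := by simpa using hφζ 0
    have hVu : V ζ₀ + u = ((‖V ζ₀‖ + 1 : ℝ) : ℂ) * u := by
      push_cast
      rw [add_one_mul, Complex.norm_mul_exp_arg_mul_I]
    rw [Pi.add_apply, hφζ₀, hVu, norm_mul, hu, mul_one, Complex.norm_real,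
      Real.norm_of_nonneg (by positivity)]
  · simpa using supNorm_le hφle

theorem sSup_eq_of_forall_le_of_forall_exists_div_le {S : Set ℝ} {c : ℝ} (hc : 0 ≤ c)
    (hub : ∀ x ∈ S, x ≤ c) (hlow : ∀ ε > 0, ∃ x ∈ S, (c - ε) / (1 + ε) ≤ x) : sSup S = c := by
  have hlim : Tendsto (fun ε : ℝ => (c - ε) / (1 + ε)) (𝓝[>] 0) (𝓝 c) := by
    have hcont : ContinuousAt (fun ε : ℝ => (c - ε) / (1 + ε)) 0 := by
      fun_prop (disch := norm_num)
    simpa using hcont.tendsto.mono_left nhdsWithin_le_nhds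
  refine le_antisymm (Real.sSup_le hub hc) (le_of_tendsto hlim ?_)
  filter_upwards [self_mem_nhdsWithin] with ε hε
  obtain ⟨x, hx, hεx⟩ := hlow ε hε
  exact hεx.trans (le_csSup ⟨c, hub⟩ hx)

theorem stmt15_general (𝒱 : Submodule ℂ (ℂ → ℂ))
    (h𝒱 : ∀ V ∈ 𝒱, MemDiscAlgebra V)
    {m : ℕ} (ζ₀ : ℂ) (ζ : Fin m → ℂ)
    (hζ₀ : ‖ζ₀‖ = 1) (hζ : ∀ k, ‖ζ k‖ = 1)
    (hinj : Function.Injective ζ) (hζ₀ζ : ∀ k, ζ₀ ≠ ζ k)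
    (as : Fin m → ℂ)
    (hasc : ∀ V ∈ 𝒱, ∑ k, as k * V (ζ k) = V ζ₀)
    (hasmin : ∀ a : Fin m → ℂ, (∀ V ∈ 𝒱, ∑ k, a k * V (ζ k) = V ζ₀) →
      ∑ k, ‖as k‖ ≤ ∑ k, ‖a k‖) :
    sSup {x : ℝ | ∃ F : ℂ → ℂ, MemDiscAlgebra F ∧ F ≠ 0 ∧
        (∀ k, F (ζ k) = 0) ∧ x = ‖F ζ₀‖ / distSup F 𝒱}
      = 1 + ∑ k, ‖as k‖ := by
  have hζ₀' : ‖ζ₀‖ ≤ 1 := hζ₀.le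
  have hζ' : ∀ k, ‖ζ k‖ ≤ 1 := fun k => (hζ k).le
  have hν : 0 ≤ 1 + ∑ k, ‖as k‖ := by positivity
  refine sSup_eq_of_forall_le_of_forall_exists_div_le hν ?_ fun ε hε => ?_
  · rintro _ ⟨F, hF, -, hFζ, rfl⟩
    exact div_le_of_le_mul₀ (distSup_nonneg F 𝒱) hν
      (norm_apply_le_mul_distSup h𝒱 hF hζ₀' hζ' hFζ hasc)
  obtain ⟨V, hV, hVζ, hVζ₀⟩ :=
    𝒱.exists_mem_norm_apply_le_one_lt_norm ζ₀ ζ as hasc hasmin (sub_lt_self _ hε)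
  obtain ⟨F, hF, hFζ, hFζ₀, hFV⟩ :=
    (h𝒱 V hV).exists_vanishing_norm_apply_eq_add_one hζ₀ hζ hinj hζ₀ζ hVζ hε
  have hFd := norm_apply_le_mul_distSup h𝒱 hF hζ₀' hζ' hFζ hasc
  have hd : 0 < distSup F 𝒱 := by nlinarith [norm_nonneg (V ζ₀), distSup_nonneg F 𝒱]
  have hF0 : F ≠ 0 := fun h => by simp [h] at hFζ₀; linarith [norm_nonneg (V ζ₀)]
  refine ⟨_, ⟨F, hF, hF0, hFζ, rfl⟩, ?_⟩
  calc (1 + ∑ k, ‖as k‖ - ε) / (1 + ε) ≤ (‖V ζ₀‖ + 1) / (1 + ε) := by gcongr; linarith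
    _ ≤ ‖F ζ₀‖ / distSup F 𝒱 :=
      hFζ₀ ▸ div_le_div_of_nonneg_left (by positivity) hd ((distSup_le_supNorm_sub F hV).trans hFV)

/-- The compatibility indicator `μ_A(ker L_ζ, 𝒱, e_{ζ_0})` equals `1 + Σ_k |a⋆_k|`,
where `a⋆` minimizes the `ℓ¹`-norm subject to the interpolation constraints on `𝒱`. -/
theorem stmt15 (𝒱 : Submodule ℂ (ℂ → ℂ)) (hfd : FiniteDimensional ℂ 𝒱)
    (h𝒱 : ∀ V ∈ 𝒱, MemDiscAlgebra V)
    {m : ℕ} (ζ₀ : ℂ) (ζ : Fin m → ℂ)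
    (hζ₀ : ‖ζ₀‖ = 1) (hζ : ∀ k, ‖ζ k‖ = 1)
    (hinj : Function.Injective ζ) (hζ₀ζ : ∀ k, ζ₀ ≠ ζ k)
    (hvan : ∀ V ∈ 𝒱, (∀ k, V (ζ k) = 0) → V = 0)
    (as : Fin m → ℂ)
    (hasc : ∀ V ∈ 𝒱, ∑ k, as k * V (ζ k) = V ζ₀)
    (hasmin : ∀ a : Fin m → ℂ, (∀ V ∈ 𝒱, ∑ k, a k * V (ζ k) = V ζ₀) →
      ∑ k, ‖as k‖ ≤ ∑ k, ‖a k‖) :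
    sSup {x : ℝ | ∃ F : ℂ → ℂ, MemDiscAlgebra F ∧ F ≠ 0 ∧
        (∀ k, F (ζ k) = 0) ∧ x = ‖F ζ₀‖ / distSup F 𝒱}
      = 1 + ∑ k, ‖as k‖ :=
  stmt15_general 𝒱 h𝒱 ζ₀ ζ hζ₀ hζ hinj hζ₀ζ as hasc hasmin
end
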